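/- arXiv:1203.3272 — 2 statements merged into one kernel-verified Lean document; each statement's English description precedes it below -/
import Mathlib

section
/- Let F: Δⁿ → ℝ be continuous on the simplex 0 < s₁ < ⋯ < s_n < 1 (extended as a symmetric smooth function). If ∫_{0<s₁<⋯<s_n<1} F(s₁,…,s_n) h(s₁)⋯h(s_n) ds₁⋯ds_n = 0 for every smooth h: [0,1] → ℝ, then F ≡ 0. -/
open MeasureTheory

/-- The open ordered simplex `0 < s₁ < ⋯ < s_n < 1`. -/
def openSimplex (n : ℕ) : Set (Fin n → ℝ) :=
  {s | (∀ i j : Fin n, i < j → s i < s j) ∧ ∀ i, s i ∈ Set.Ioo (0:ℝ) 1}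

lemma isOpen_openSimplex (n : ℕ) : IsOpen (openSimplex n) := by
  have h1 : openSimplex n =
      (⋂ i, ⋂ j, {s : Fin n → ℝ | i < j → s i < s j}) ∩
        ⋂ i, (fun s : Fin n → ℝ => s i) ⁻¹' Set.Ioo 0 1 := by
    ext s; simp [openSimplex, Set.mem_iInter]
  rw [h1]
  refine IsOpen.inter (isOpen_iInter_of_finite fun i => isOpen_iInter_of_finite fun j => ?_)
    (isOpen_iInter_of_finite fun i => (isOpen_Ioo).preimage (continuous_apply i))
  by_cases hij : i < j
  · have h2 : {s : Fin n → ℝ | i < j → s i < s j} = {s | s i < s j} := by ext s; simp [hij]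
    rw [h2]; exact isOpen_lt (continuous_apply i) (continuous_apply j)
  · have h2 : {s : Fin n → ℝ | i < j → s i < s j} = Set.univ := by ext s; simp [hij]
    rw [h2]; exact isOpen_univ

lemma openSimplex_subset_Icc (n : ℕ) :
    openSimplex n ⊆ Set.Icc (0 : Fin n → ℝ) 1 :=
  fun s hs => ⟨fun i => (hs.2 i).1.le, fun i => (hs.2 i).2.le⟩

lemma integrableOn_openSimplex {n : ℕ} {f : (Fin n → ℝ) → ℝ} (hf : Continuous f) :
    IntegrableOn f (openSimplex n) :=
  (ContinuousOn.integrableOn_compact isCompact_Icc hf.continuousOn).mono_set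
    (openSimplex_subset_Icc n)

lemma contDiff_top_poly (p : Polynomial ℝ) : ContDiff ℝ (⊤ : ℕ∞) fun x : ℝ => p.eval x := by
  have h : (fun x : ℝ => p.eval x) =
      fun x => ∑ k ∈ Finset.range (p.natDegree + 1), p.coeff k * x ^ k := by
    funext x
    rw [Polynomial.eval_eq_sum_range]
  rw [h]
  exact ContDiff.sum fun k _ => contDiff_const.mul (contDiff_id.pow k)

lemma abs_prod_sub_prod_le {ι : Type*} (s : Finset ι) (a b : ι → ℝ) (M : ℝ) (hM : 1 ≤ M)
    (ha : ∀ i ∈ s, |a i| ≤ M) (hb : ∀ i ∈ s, |b i| ≤ M) :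
    |(∏ i ∈ s, a i) - ∏ i ∈ s, b i| ≤ M ^ s.card * ∑ i ∈ s, |a i - b i| := by
  classical
  induction s using Finset.induction_on with
  | empty => simp
  | @insert j s hj ih =>
    rw [Finset.prod_insert hj, Finset.prod_insert hj, Finset.sum_insert hj,
      Finset.card_insert_of_notMem hj]
    have hbP : |∏ i ∈ s, b i| ≤ M ^ s.card := by
      rw [Finset.abs_prod]
      calc (∏ i ∈ s, |b i|) ≤ ∏ i ∈ s, M :=
            Finset.prod_le_prod (fun i _ => abs_nonneg _)
              (fun i hi => hb i (Finset.mem_insert_of_mem hi))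
        _ = M ^ s.card := by rw [Finset.prod_const]
    have hkey : a j * ∏ i ∈ s, a i - b j * ∏ i ∈ s, b i =
        a j * ((∏ i ∈ s, a i) - ∏ i ∈ s, b i) + (a j - b j) * ∏ i ∈ s, b i := by ring
    have ih' := ih (fun i hi => ha i (Finset.mem_insert_of_mem hi))
      (fun i hi => hb i (Finset.mem_insert_of_mem hi))
    have haj : |a j| ≤ M := ha j (Finset.mem_insert_self j s)
    have h1 : |a j * ∏ i ∈ s, a i - b j * ∏ i ∈ s, b i| ≤
        |a j| * |(∏ i ∈ s, a i) - ∏ i ∈ s, b i| + |a j - b j| * |∏ i ∈ s, b i| := by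
      rw [hkey]
      refine (abs_add_le _ _).trans ?_
      rw [abs_mul, abs_mul]
    refine h1.trans ?_
    have hMpow : (0:ℝ) ≤ M ^ s.card := by positivity
    have hMpow1 : M ^ s.card ≤ M ^ (s.card + 1) :=
      pow_le_pow_right₀ hM (Nat.le_succ _)
    have h2 : |a j| * |(∏ i ∈ s, a i) - ∏ i ∈ s, b i| ≤
        M * (M ^ s.card * ∑ i ∈ s, |a i - b i|) := by
      refine mul_le_mul haj ih' (abs_nonneg _) (by linarith)
    have h3 : |a j - b j| * |∏ i ∈ s, b i| ≤ |a j - b j| * M ^ s.card :=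
      mul_le_mul_of_nonneg_left hbP (abs_nonneg _)
    have h4 : M * (M ^ s.card * ∑ i ∈ s, |a i - b i|) =
        M ^ (s.card + 1) * ∑ i ∈ s, |a i - b i| := by ring
    have h5 : |a j - b j| * M ^ s.card ≤ |a j - b j| * M ^ (s.card + 1) :=
      mul_le_mul_of_nonneg_left hMpow1 (abs_nonneg _)
    have hsum : (0:ℝ) ≤ ∑ i ∈ s, |a i - b i| :=
      Finset.sum_nonneg fun i _ => abs_nonneg _
    calc |a j| * |(∏ i ∈ s, a i) - ∏ i ∈ s, b i| + |a j - b j| * |∏ i ∈ s, b i|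
        ≤ M ^ (s.card + 1) * ∑ i ∈ s, |a i - b i| + |a j - b j| * M ^ (s.card + 1) := by
          rw [← h4] at *
          exact add_le_add h2 (h3.trans h5)
      _ = M ^ (s.card + 1) * (|a j - b j| + ∑ i ∈ s, |a i - b i|) := by ring

/-- Extend the vanishing hypothesis from analytic to continuous test functions,
via the Weierstrass approximation theorem. -/
lemma vanish_continuous {n : ℕ} (G : (Fin n → ℝ) → ℝ) (hG : Continuous G)
    (hvan : ∀ h : ℝ → ℝ, ContDiff ℝ (⊤ : ℕ∞) h →
      (∫ s in openSimplex n, G s * ∏ i, h (s i)) = 0)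
    (h : ℝ → ℝ) (hh : Continuous h) :
    (∫ s in openSimplex n, G s * ∏ i, h (s i)) = 0 := by
  classical
  obtain ⟨C0, hC0⟩ := isCompact_Icc.exists_bound_of_continuousOn
    (hG.continuousOn (s := Set.Icc (0 : Fin n → ℝ) 1))
  set C : ℝ := max C0 0 with hCdef
  have hC : ∀ s ∈ Set.Icc (0 : Fin n → ℝ) 1, |G s| ≤ C :=
    fun s hs => le_trans (hC0 s hs) (le_max_left _ _)
  have hCnn : (0:ℝ) ≤ C := le_max_right _ _
  obtain ⟨M0, hM0⟩ := isCompact_Icc.exists_bound_of_continuousOn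
    (hh.continuousOn (s := Set.Icc (0:ℝ) 1))
  set M : ℝ := max M0 0 + 1 with hMdef
  have hM1 : (1:ℝ) ≤ M := by
    have : (0:ℝ) ≤ max M0 0 := le_max_right _ _
    linarith
  have hMh : ∀ x ∈ Set.Icc (0:ℝ) 1, |h x| ≤ M := by
    intro x hx
    have := hM0 x hx
    have h2 : M0 ≤ max M0 0 := le_max_left _ _
    simp only [Real.norm_eq_abs] at this
    linarith
  have hvol : volume (openSimplex n) < ⊤ :=
    lt_of_le_of_lt (measure_mono (openSimplex_subset_Icc n)) isCompact_Icc.measure_lt_top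
  set K : ℝ := C * (M ^ n * n) * (volume (openSimplex n)).toReal + 1 with hKdef
  have hKpos : (0:ℝ) < K := by
    have h1 : (0:ℝ) ≤ C * (M ^ n * n) * (volume (openSimplex n)).toReal := by positivity
    linarith
  set I : ℝ := ∫ s in openSimplex n, G s * ∏ i, h (s i) with hIdef
  have hbound : ∀ η : ℝ, 0 < η → η ≤ 1 → |I| ≤ K * η := by
    intro η hη hη1
    obtain ⟨p, hp⟩ := exists_polynomial_near_of_continuousOn 0 1 h
      (hh.continuousOn) η hη
    have hvp := hvan (fun x => p.eval x) (contDiff_top_poly p)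
    have hint1 : IntegrableOn (fun s => G s * ∏ i, h (s i)) (openSimplex n) :=
      integrableOn_openSimplex (hG.mul (continuous_finset_prod _ fun i _ =>
        hh.comp (continuous_apply i)))
    have hint2 : IntegrableOn (fun s => G s * ∏ i, p.eval (s i)) (openSimplex n) :=
      integrableOn_openSimplex (hG.mul (continuous_finset_prod _ fun i _ =>
        (p.continuous_aeval).comp (continuous_apply i)))
    have hIeq : I = ∫ s in openSimplex n,
        (G s * ∏ i, h (s i) - G s * ∏ i, p.eval (s i)) := by
      rw [integral_sub hint1 hint2, hvp, sub_zero]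
    rw [hIeq]
    have hptwise : ∀ s ∈ openSimplex n,
        ‖G s * ∏ i, h (s i) - G s * ∏ i, p.eval (s i)‖ ≤ C * (M ^ n * n) * η := by
      intro s hs
      have hsIcc := openSimplex_subset_Icc n hs
      have hsi : ∀ i, s i ∈ Set.Icc (0:ℝ) 1 := fun i => ⟨hsIcc.1 i, hsIcc.2 i⟩
      have hGb : |G s| ≤ C := hC s hsIcc
      have hpb : ∀ i : Fin n, |p.eval (s i)| ≤ M := by
        intro i
        have h1 := hp (s i) (hsi i)
        have h2 := hMh (s i) (hsi i)
        have h3 : |p.eval (s i)| ≤ |p.eval (s i) - h (s i)| + |h (s i)| := by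
          have := abs_sub_abs_le_abs_sub (p.eval (s i)) (h (s i))
          linarith [abs_sub_abs_le_abs_sub (p.eval (s i)) (h (s i))]
        rw [hMdef]
        have h4 : M0 ≤ max M0 0 := le_max_left _ _
        have h5 : |h (s i)| ≤ max M0 0 := by
          have := hM0 (s i) (hsi i); simp only [Real.norm_eq_abs] at this; linarith
        linarith
      have hprod : |(∏ i, h (s i)) - ∏ i, p.eval (s i)| ≤ M ^ n * (n * η) := by
        have := abs_prod_sub_prod_le Finset.univ (fun i => h (s i))
          (fun i => p.eval (s i)) M hM1
          (fun i _ => hMh (s i) (hsi i)) (fun i _ => hpb i)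
        rw [Finset.card_univ, Fintype.card_fin] at this
        refine this.trans ?_
        have hsum : (∑ i : Fin n, |h (s i) - p.eval (s i)|) ≤ n * η := by
          calc (∑ i : Fin n, |h (s i) - p.eval (s i)|) ≤ ∑ _i : Fin n, η := by
                refine Finset.sum_le_sum fun i _ => ?_
                have := hp (s i) (hsi i)
                rw [abs_sub_comm]
                linarith
            _ = n * η := by rw [Finset.sum_const, Finset.card_univ, Fintype.card_fin,
                nsmul_eq_mul]
          
        have hMn : (0:ℝ) ≤ M ^ n := by positivity
        exact mul_le_mul_of_nonneg_left hsum hMn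
      rw [← mul_sub, Real.norm_eq_abs, abs_mul]
      calc |G s| * |(∏ i, h (s i)) - ∏ i, p.eval (s i)| ≤ C * (M ^ n * (n * η)) :=
            mul_le_mul hGb hprod (abs_nonneg _) hCnn
        _ = C * (M ^ n * n) * η := by ring
    have hnorm := norm_setIntegral_le_of_norm_le_const (μ := volume)
      (s := openSimplex n) hvol hptwise
    rw [Real.norm_eq_abs] at hnorm
    refine hnorm.trans ?_
    rw [hKdef]
    have hη0 : (0:ℝ) ≤ η := hη.le
    have hvnn : (0:ℝ) ≤ (volume (openSimplex n)).toReal := ENNReal.toReal_nonneg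
    have h1 : C * (M ^ n * n) * η * (volume (openSimplex n)).toReal =
        C * (M ^ n * n) * (volume (openSimplex n)).toReal * η := by ring
    rw [measureReal_def, h1]
    nlinarith [mul_nonneg (mul_nonneg (mul_nonneg hCnn (by positivity : (0:ℝ) ≤ M ^ n * n)) hvnn) hη0]
  by_contra hI
  have hIpos : 0 < |I| := abs_pos.2 hI
  set η0 : ℝ := min 1 (|I| / (2 * K)) with hη0def
  have hη0pos : 0 < η0 := lt_min one_pos (by positivity)
  have hη01 : η0 ≤ 1 := min_le_left _ _
  have hb := hbound η0 hη0pos hη01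
  have h2 : K * η0 ≤ K * (|I| / (2 * K)) :=
    mul_le_mul_of_nonneg_left (min_le_right _ _) hKpos.le
  have h3 : K * (|I| / (2 * K)) = |I| / 2 := by
    field_simp
  have h4 : |I| ≤ |I| / 2 := hb.trans (h2.trans_eq h3)
  linarith

lemma alt_sum_supersets {n : ℕ} (R : Finset (Fin n)) :
    (∑ S : Finset (Fin n), if R ⊆ S then (-1:ℝ)^(Sᶜ.card) else 0) =
      if R = Finset.univ then 1 else 0 := by
  classical
  have h1 : (∑ S : Finset (Fin n), if R ⊆ S then (-1:ℝ)^(Sᶜ.card) else 0) =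
      ∑ T : Finset (Fin n), if T ⊆ Rᶜ then (-1:ℝ)^(T.card) else 0 := by
    refine Fintype.sum_equiv ⟨compl, compl, compl_compl, compl_compl⟩ _ _ fun S => ?_
    simp only [Equiv.coe_fn_mk, compl_compl, Finset.compl_subset_compl]
  rw [h1]
  have hfil : Finset.univ.filter (fun T : Finset (Fin n) => T ⊆ Rᶜ) = (Rᶜ).powerset := by
    ext T; simp [Finset.mem_powerset]
  have h2 : (∑ T : Finset (Fin n), if T ⊆ Rᶜ then (-1:ℝ)^(T.card) else 0) =
      ∑ T ∈ (Rᶜ).powerset, (-1:ℝ)^(T.card) := by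
    rw [← hfil, Finset.sum_filter]
  rw [h2]
  have h3 : (∑ T ∈ (Rᶜ).powerset, (-1:ℝ)^(T.card)) =
      ((∑ T ∈ (Rᶜ).powerset, (-1:ℤ)^(T.card) : ℤ) : ℝ) := by push_cast; rfl
  rw [h3, Finset.sum_powerset_neg_one_pow_card]
  by_cases hR : R = Finset.univ
  · simp [hR]
  · have : ¬ (Rᶜ = ∅) := by simpa [Finset.compl_eq_empty_iff] using hR
    simp [hR, this]

lemma fin_strictMono_eq_id {n : ℕ} {p : Fin n → Fin n} (h : StrictMono p)
    (hs : Function.Surjective p) : p = id := by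
  have h1 : Set.range p = Set.range (id : Fin n → Fin n) := by
    rw [Set.range_id]
    exact Set.range_eq_univ.2 hs
  haveI w : WellFoundedLT (Fin n) := inferInstance
  exact (@StrictMono.range_inj (Fin n) (Fin n) inferInstance inferInstance w
    p id h strictMono_id).1 h1

lemma comb {n : ℕ} (v : Fin n → Fin n → ℝ)
    (huniq : ∀ i j k, v j i ≠ 0 → v k i ≠ 0 → j = k)
    (hmono : ∀ i i' : Fin n, i < i' → ∀ j j', v j i ≠ 0 → v j' i' ≠ 0 → j ≤ j') :
    (∑ S : Finset (Fin n), (-1:ℝ)^(Sᶜ.card) * ∏ i, (∑ j ∈ S, v j i)) = ∏ i, v i i := by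
  classical
  by_cases hA : ∃ i, ∀ j, v j i = 0
  · obtain ⟨i0, hi0⟩ := hA
    have hz : ∀ S : Finset (Fin n), (∏ i, (∑ j ∈ S, v j i)) = 0 :=
      fun S => Finset.prod_eq_zero (Finset.mem_univ i0) (by simp [hi0])
    simp only [hz, mul_zero, Finset.sum_const_zero]
    exact (Finset.prod_eq_zero (f := fun i => v i i) (Finset.mem_univ i0) (hi0 i0)).symm
  · push_neg at hA
    choose p hp using hA
    have hvz : ∀ i j, j ≠ p i → v j i = 0 := by
      intro i j hj
      by_contra h
      exact hj (huniq i j (p i) h (hp i))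
    have hsum : ∀ (S : Finset (Fin n)) i, (∑ j ∈ S, v j i) =
        if p i ∈ S then v (p i) i else 0 := by
      intro S i
      split_ifs with h
      · exact Finset.sum_eq_single_of_mem _ h fun b _ hb => hvz i b hb
      · exact Finset.sum_eq_zero fun b hb => hvz i b (by rintro rfl; exact h hb)
    have hprod : ∀ S : Finset (Fin n), (∏ i, (∑ j ∈ S, v j i)) =
        if Finset.univ.image p ⊆ S then ∏ i, v (p i) i else 0 := by
      intro S
      simp only [hsum]
      split_ifs with h
      · exact Finset.prod_congr rfl fun i _ =>
          if_pos (h (Finset.mem_image_of_mem p (Finset.mem_univ i)))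
      · obtain ⟨x, hx, hxS⟩ := Finset.not_subset.1 h
        obtain ⟨i, -, rfl⟩ := Finset.mem_image.1 hx
        exact Finset.prod_eq_zero (Finset.mem_univ i) (if_neg hxS)
    have hstep : (∑ S : Finset (Fin n), (-1:ℝ)^(Sᶜ.card) * ∏ i, (∑ j ∈ S, v j i)) =
        (if Finset.univ.image p = Finset.univ then 1 else 0) * ∏ i, v (p i) i := by
      rw [← alt_sum_supersets (Finset.univ.image p), Finset.sum_mul]
      refine Finset.sum_congr rfl fun S _ => ?_
      rw [hprod S]
      split_ifs with h <;> ring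
    rw [hstep]
    by_cases hsurj : Finset.univ.image p = Finset.univ
    · have hpsurj : Function.Surjective p := by
        intro j
        have hmem : j ∈ Finset.univ.image p := by rw [hsurj]; exact Finset.mem_univ j
        obtain ⟨i, -, hi⟩ := Finset.mem_image.1 hmem
        exact ⟨i, hi⟩
      have hpinj : Function.Injective p := Finite.injective_iff_surjective.2 hpsurj
      have hpmono : Monotone p := by
        intro i i' hii'
        rcases eq_or_lt_of_le hii' with rfl | hlt
        · exact le_rfl
        · exact hmono i i' hlt (p i) (p i') (hp i) (hp i')
      have hpid : p = id := fin_strictMono_eq_id (hpmono.strictMono_of_injective hpinj) hpsurj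
      rw [if_pos hsurj, one_mul]
      exact Finset.prod_congr rfl fun i _ => by rw [hpid]; rfl
    · rw [if_neg hsurj, zero_mul]
      by_contra hP
      have hall : ∀ i, v i i ≠ 0 := by
        intro i hi
        exact (Ne.symm hP) (Finset.prod_eq_zero (f := fun i => v i i) (Finset.mem_univ i) hi)
      have hid : ∀ i, p i = i := fun i => huniq i (p i) i (hp i) (hall i)
      apply hsurj
      ext j
      simp only [Finset.mem_image, Finset.mem_univ, iff_true, true_and]
      exact ⟨j, hid j⟩

/-- a continuous symmetric kernel `F` whose integrals over the
ordered simplex against all diagonal products `h(s₁)⋯h(s_n)` of smooth test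
functions vanish is identically zero on the simplex. -/
theorem simplex_injectivity {n : ℕ} (F : (Fin n → ℝ) → ℝ)
    (hF : Continuous F)
    (hsym : ∀ (σ : Equiv.Perm (Fin n)) (s : Fin n → ℝ), F (s ∘ σ) = F s)
    (hvanish : ∀ h : ℝ → ℝ, ContDiff ℝ (⊤ : ℕ∞) h →
      (∫ s in openSimplex n, F s * ∏ i, h (s i)) = 0) :
    ∀ s ∈ openSimplex n, F s = 0 := by
  classical
  suffices H : ∀ G : (Fin n → ℝ) → ℝ, Continuous G →
      (∀ h : ℝ → ℝ, Continuous h →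
        (∫ s in openSimplex n, G s * ∏ i, h (s i)) = 0) →
      ∀ s ∈ openSimplex n, ¬ (0 < G s) by
    intro s hs
    by_contra hFs
    rcases lt_or_gt_of_ne hFs with hneg | hpos
    · refine H (fun t => -F t) hF.neg (fun h hh => ?_) s hs (by simpa using hneg)
      simp only [neg_mul]
      rw [integral_neg, vanish_continuous F hF hvanish h hh, neg_zero]
    · exact H F hF (fun h hh => vanish_continuous F hF hvanish h hh) s hs hpos
  intro G hG hvan s0 hs0 hpos
  set c := G s0 with hc
  obtain ⟨δ, hδpos, hδ⟩ := Metric.continuous_iff.1 hG s0 (c/2) (by positivity)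
  -- choose ε
  have hev : ∀ᶠ ε in nhds (0:ℝ), ε < δ ∧ (∀ i, ε < s0 i ∧ s0 i + ε < 1) ∧
      (∀ i j : Fin n, i < j → s0 i + ε < s0 j - ε) := by
    refine Filter.Eventually.and ?_ (Filter.Eventually.and ?_ ?_)
    · exact Filter.eventually_of_mem (Iio_mem_nhds hδpos) fun x hx => hx
    · refine Filter.eventually_all.2 fun i => Filter.Eventually.and ?_ ?_
      · exact Filter.eventually_of_mem (Iio_mem_nhds (hs0.2 i).1) fun x hx => hx
      · refine Filter.eventually_of_mem (Iio_mem_nhds (show (0:ℝ) < 1 - s0 i by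
          have := (hs0.2 i).2; linarith)) fun x hx => ?_
        simp only [Set.mem_Iio] at hx; linarith
    · refine Filter.eventually_all.2 fun i => Filter.eventually_all.2 fun j => ?_
      by_cases hij : i < j
      · have hgap : (0:ℝ) < (s0 j - s0 i)/2 := by have := hs0.1 i j hij; linarith
        refine Filter.eventually_of_mem (Iio_mem_nhds hgap) fun x hx _ => ?_
        simp only [Set.mem_Iio] at hx; linarith
      · exact Filter.Eventually.of_forall fun x h' => absurd h' hij
  obtain ⟨ε, hεmem, hεpos⟩ :=
    (((hev.filter_mono (nhdsWithin_le_nhds (s := Set.Ioi (0:ℝ)))).and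
      eventually_mem_nhdsWithin).exists)
  obtain ⟨hεδ, hεio, hεgap⟩ := hεmem
  rw [Set.mem_Ioi] at hεpos
  -- tent functions
  set φ : Fin n → ℝ → ℝ := fun i x => max (ε - |x - s0 i|) 0 with hφ
  have hφc : ∀ i, Continuous (φ i) := by
    intro i
    exact (continuous_const.sub (continuous_id.sub continuous_const).abs).max continuous_const
  have hφnn : ∀ i x, 0 ≤ φ i x := fun i x => le_max_right _ _
  have hφsupp : ∀ (i : Fin n) (x : ℝ), φ i x ≠ 0 → |x - s0 i| < ε := by
    intro i x hx
    by_contra hge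
    push_neg at hge
    exact hx (max_eq_right (by linarith))
  have hφpos : ∀ (i : Fin n) (x : ℝ), |x - s0 i| < ε → 0 < φ i x :=
    fun i x hx => lt_of_lt_of_le (by linarith : (0:ℝ) < ε - |x - s0 i|) (le_max_left _ _)
  -- closeness of G
  have hclose : ∀ s : Fin n → ℝ, (∀ i, φ i (s i) ≠ 0) → c/2 < G s := by
    intro s hsB
    have hd : dist s s0 < δ := by
      refine lt_of_le_of_lt ((dist_pi_le_iff hεpos.le).2 fun i => ?_) hεδ
      have := hφsupp i (s i) (hsB i)
      rw [Real.dist_eq]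
      exact this.le
    have h2 := hδ s hd
    rw [Real.dist_eq, ← hc] at h2
    have := abs_lt.1 h2
    linarith [this.1]
  set g : (Fin n → ℝ) → ℝ := fun s => G s * ∏ i, φ i (s i) with hg
  have hgc : Continuous g :=
    hG.mul (continuous_finset_prod _ fun i _ => (hφc i).comp (continuous_apply i))
  have hmeas : MeasurableSet (openSimplex n) := (isOpen_openSimplex n).measurableSet
  -- key: integral of g over simplex is 0
  have key : (∫ s in openSimplex n, g s) = 0 := by
    have h1 : ∀ S : Finset (Fin n),
        (∫ s in openSimplex n, G s * ∏ i, (∑ j ∈ S, φ j (s i))) = 0 := by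
      intro S
      exact hvan (fun x => ∑ j ∈ S, φ j x)
        (continuous_finset_sum _ fun j _ => hφc j)
    have h3 : Set.EqOn g
        (fun s => ∑ S : Finset (Fin n),
          (-1:ℝ)^(Sᶜ.card) * (G s * ∏ i, (∑ j ∈ S, φ j (s i)))) (openSimplex n) := by
      intro s hs
      have huniq' : ∀ i j k : Fin n, φ j (s i) ≠ 0 → φ k (s i) ≠ 0 → j = k := by
        intro i j k hj hk
        by_contra hjk
        have h1 := hφsupp j (s i) hj
        have h2 := hφsupp k (s i) hk
        rcases (Ne.lt_or_gt hjk) with hlt | hlt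
        · linarith [(abs_lt.1 h1).2, (abs_lt.1 h2).1, hεgap j k hlt]
        · linarith [(abs_lt.1 h2).2, (abs_lt.1 h1).1, hεgap k j hlt]
      have hmono' : ∀ i i' : Fin n, i < i' → ∀ j j' : Fin n,
          φ j (s i) ≠ 0 → φ j' (s i') ≠ 0 → j ≤ j' := by
        intro i i' hii' j j' hj hj'
        by_contra hjj'
        push_neg at hjj'
        have hss : s i < s i' := hs.1 i i' hii'
        linarith [(abs_lt.1 (hφsupp j (s i) hj)).1, (abs_lt.1 (hφsupp j' (s i') hj')).2,
          hεgap j' j hjj']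
      have hcomb := comb (fun j i => φ j (s i)) huniq' hmono'
      show g s = _
      rw [hg]
      simp only
      calc G s * ∏ i, φ i (s i)
          = G s * ∑ S : Finset (Fin n), (-1:ℝ)^(Sᶜ.card) * ∏ i, (∑ j ∈ S, φ j (s i)) := by
            rw [hcomb]
        _ = ∑ S : Finset (Fin n), (-1:ℝ)^(Sᶜ.card) * (G s * ∏ i, (∑ j ∈ S, φ j (s i))) := by
            rw [Finset.mul_sum]
            exact Finset.sum_congr rfl fun S _ => by ring
    rw [setIntegral_congr_fun hmeas h3]
    rw [integral_finset_sum]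
    · refine Finset.sum_eq_zero fun S _ => ?_
      rw [integral_const_mul, h1 S, mul_zero]
    · intro S _
      refine integrableOn_openSimplex ?_
      exact continuous_const.mul (hG.mul (continuous_finset_prod _ fun i _ =>
        continuous_finset_sum _ fun j _ => (hφc j).comp (continuous_apply i)))
  -- positivity
  have hg0 : ∀ s, 0 ≤ g s := by
    intro s
    by_cases hb : ∀ i, φ i (s i) ≠ 0
    · have h1 : (0:ℝ) < c/2 := by positivity
      exact mul_nonneg (by linarith [hclose s hb]) (Finset.prod_nonneg fun i _ => hφnn i _)
    · push_neg at hb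
      obtain ⟨i, hi⟩ := hb
      have hz : (∏ k, φ k (s k)) = 0 :=
        Finset.prod_eq_zero (f := fun k => φ k (s k)) (Finset.mem_univ i) hi
      simp only [hg, hz, mul_zero, le_refl]
  have hVsub : (Set.univ.pi fun i => Metric.ball (s0 i) ε) ⊆
      Function.support g ∩ openSimplex n := by
    intro s hsV
    have habs : ∀ i, |s i - s0 i| < ε := by
      intro i
      have := hsV i (Set.mem_univ i)
      simpa [Real.dist_eq] using this
    have hφp : ∀ i, 0 < φ i (s i) := fun i => hφpos i (s i) (habs i)
    have hsimp : s ∈ openSimplex n := by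
      refine ⟨fun i j hij => ?_, fun i => ?_⟩
      · have h1 := (abs_lt.1 (habs i)).2
        have h2 := (abs_lt.1 (habs j)).1
        have := hεgap i j hij
        linarith
      · have h1 := abs_lt.1 (habs i)
        have h2 := hεio i
        exact ⟨by linarith [h1.1, h2.1], by linarith [h1.2, h2.2]⟩
    refine ⟨Function.mem_support.2 ?_, hsimp⟩
    have hGpos : 0 < G s := by
      have := hclose s fun i => (hφp i).ne'
      have h1 : (0:ℝ) < c/2 := by positivity
      linarith
    exact (mul_pos hGpos (Finset.prod_pos fun i _ => hφp i)).ne'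
  have hposint : 0 < ∫ s in openSimplex n, g s := by
    rw [setIntegral_pos_iff_support_of_nonneg_ae
      (Filter.Eventually.of_forall hg0) (integrableOn_openSimplex hgc)]
    refine lt_of_lt_of_le ?_ (measure_mono hVsub)
    exact ((isOpen_set_pi Set.finite_univ fun i _ => Metric.isOpen_ball).measure_pos volume
      ⟨s0, fun i _ => Metric.mem_ball_self hεpos⟩)
  exact absurd key (ne_of_gt hposint)
end

section
/- The Poisson bracket {F,G} = Σ_{m,n} Σ_{i,j,k} (Ck²+1) ω^{ij} :a_{γ_{i,k}}Fⁿ · a_{γ_{j,k}}Gᵐ: is a continuous bilinear map CO_{∞−} × CO_{∞−} → CO_{∞−}: for all k, C > 0 there exist K, k₃, C₃ > 0 with ||{F,G}||_{k,C} ≤ K ||F||_{k₃,C₃} ||G||_{k₃,C₃}. The key point is that integration by parts converts the unbounded factor (Ck²+1) into the summable factor (Ck²+1)^{−1}, using Σ_k 1/(Ck²+1) < ∞. -/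
open MeasureTheory Real
open scoped BigOperators

noncomputable section

/-- Partial derivative of `f` in coordinate `i`. -/
def pder {n : ℕ} (i : Fin n) (f : (Fin n → ℝ) → ℝ) : (Fin n → ℝ) → ℝ :=
  fun x => deriv (fun t => f (Function.update x i t)) (x i)

/-- Mixed partial derivative with multi-index `β`. -/
def mixedDeriv {n : ℕ} (β : Fin n → ℕ) (f : (Fin n → ℝ) → ℝ) : (Fin n → ℝ) → ℝ :=
  (List.finRange n).foldr (fun i g => (pder i)^[β i] g) f

/-- Components of an `(ℝ^ι)^{⊗n}`-valued kernel of chaos degree `n`. -/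
def ChaosFun (ι : Type) (n : ℕ) := (Fin n → ι) → (Fin n → ℝ) → ℝ

/-- An element of the algebraic Fock space: a sequence of chaos kernels. -/
def ConnesSeq (ι : Type) := (n : ℕ) → ChaosFun ι n

/-- The `k`-th Connes seminorm of a degree-`n` kernel: sup-norms of all mixed
partial derivatives of order at most `k` in each variable. -/
def knorm {ι : Type} [Fintype ι] {n : ℕ} (k : ℕ) (f : ChaosFun ι n) : ℝ :=
  ∑ β : Fin n → Fin (k+1), ⨆ (c : Fin n → ι) (x : Fin n → ℝ),
    |mixedDeriv (fun i => (β i : ℕ)) (f c) x|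

/-- The Connes norm `‖F‖_{k,C} = Σ Cⁿ ‖Fⁿ‖_k`. -/
def CNorm {ι : Type} [Fintype ι] (k : ℕ) (C : ℝ) (F : ConnesSeq ι) : ℝ :=
  ∑' n, C^n * knorm k (F n)

def SymmetricChaos {ι : Type} {n : ℕ} (f : ChaosFun ι n) : Prop :=
  ∀ (σ : Equiv.Perm (Fin n)) (c : Fin n → ι) (x : Fin n → ℝ), f (c ∘ σ) (x ∘ σ) = f c x

def PeriodicChaos {ι : Type} {n : ℕ} (f : ChaosFun ι n) : Prop :=
  ∀ (c : Fin n → ι) (x : Fin n → ℝ) (i : Fin n),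
    f c (Function.update x i (x i + 1)) = f c x

/-- Membership in the Connes space `CO_{∞-}`. -/
def MemConnes {ι : Type} [Fintype ι] (F : ConnesSeq ι) : Prop :=
  (∀ n (c : Fin n → ι), ContDiff ℝ (⊤ : ℕ∞) (F n c)) ∧
  (∀ n, SymmetricChaos (F n)) ∧
  (∀ n, PeriodicChaos (F n)) ∧
  (∀ (k : ℕ) (C : ℝ), 0 < C → Summable (fun n => C^n * knorm k (F n)))

def castChaos {ι : Type} {n m : ℕ} (h : n = m) (f : ChaosFun ι n) : ChaosFun ι m :=
  fun c x => f (c ∘ Fin.cast h) (x ∘ Fin.cast h)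

def tensorChaos {ι : Type} {n m : ℕ} (f : ChaosFun ι n) (g : ChaosFun ι m) :
    ChaosFun ι (n+m) :=
  fun c x => f (fun i => c (Fin.castAdd m i)) (fun i => x (Fin.castAdd m i)) *
    g (fun j => c (Fin.natAdd n j)) (fun j => x (Fin.natAdd n j))

def permChaos {ι : Type} {n : ℕ} (σ : Equiv.Perm (Fin n)) (f : ChaosFun ι n) : ChaosFun ι n :=
  fun c x => f (c ∘ σ) (x ∘ σ)

/-- The symmetrized tensor product `f ⊗̂ g`. -/
def symTensor {ι : Type} {n m : ℕ} (f : ChaosFun ι n) (g : ChaosFun ι m) :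
    ChaosFun ι (n+m) :=
  fun c x => ((Nat.factorial (n+m) : ℝ))⁻¹ *
    ∑ σ : Equiv.Perm (Fin (n+m)), permChaos σ (tensorChaos f g) c x

/-- The Wick product `:F·G: = Σ_{n+m=N} Fⁿ ⊗̂ Gᵐ`. -/
def wick {ι : Type} (F G : ConnesSeq ι) : ConnesSeq ι :=
  fun N c x => ∑ i ∈ (Finset.range (N+1)).attach,
    castChaos (by have := Finset.mem_range.mp i.2; omega : i.1 + (N - i.1) = N)
      (symTensor (F i.1) (G (N - i.1))) c x

def cube (n : ℕ) : Set (Fin n → ℝ) := Set.univ.pi fun _ => Set.Icc (0:ℝ) 1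

/-- `n`-th Stratonovich chaos of the kernel `f` evaluated on the path `B`. -/
def stratChaosN {ι : Type} [Fintype ι] {n : ℕ} (f : ChaosFun ι n) (B : ℝ → ι → ℝ) : ℝ :=
  ∑ J : Finset (Fin n), (-1 : ℝ)^(n - J.card) *
    ∫ s in cube n, ∑ c : Fin n → ι,
      mixedDeriv (fun i => if i ∈ J then 2 else 0) (f c) s * ∏ i, B (s i) (c i)

/-- The Stratonovich chaos `I^S(F)(B)`. -/
def stratChaos {ι : Type} [Fintype ι] (F : ConnesSeq ι) (B : ℝ → ι → ℝ) : ℝ :=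
  ∑' n, stratChaosN (F n) B

/-- The annihilation operator `a_h`. -/
def annih {ι : Type} [Fintype ι] (h : ℝ → ι → ℝ) (F : ConnesSeq ι) : ConnesSeq ι :=
  fun n c x => ∫ t in (0:ℝ)..1, ∑ j : ι,
    (F (n+1) (Fin.snoc c j) (Fin.snoc x t) * h t j +
      pder (Fin.last n) (F (n+1) (Fin.snoc c j)) (Fin.snoc x t) * deriv (fun u => h u j) t)

/-- The `H¹(S¹)` Sobolev norm of `h`. -/
def H1norm {ι : Type} [Fintype ι] (h : ℝ → ι → ℝ) : ℝ :=
  Real.sqrt ((∫ t in (0:ℝ)..1, ∑ j : ι, (h t j)^2) +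
    ∫ t in (0:ℝ)..1, ∑ j : ι, (deriv (fun u => h u j) t)^2)


/-- The Fourier basis vector `γ_{i,k}` of `H¹(S¹,ℝ^d)`. -/
def fBasis {d : ℕ} (lam : ℝ) (i : Fin d) (k : ℤ) : ℝ → Fin d → ℝ :=
  fun s j =>
    ((if 0 ≤ k then Real.cos (2 * (k:ℝ) * Real.pi * s)
      else Real.sin (2 * (k:ℝ) * Real.pi * s)) / Real.sqrt (lam * (k:ℝ)^2 + 1)) *
    (if j = i then 1 else 0)

/-- The Poisson bracket
`{F,G} = Σ_{i,j,k} (Ck²+1) ω^{ij} :a_{γ_{i,k}}F · a_{γ_{j,k}}G:`. -/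
def poissonBracket {d : ℕ} (lam : ℝ) (ω : Matrix (Fin d) (Fin d) ℝ)
    (F G : ConnesSeq (Fin d)) : ConnesSeq (Fin d) :=
  fun N c x => ∑' k : ℤ, ∑ i : Fin d, ∑ j : Fin d,
    (lam * (k:ℝ)^2 + 1) * (ω⁻¹ i j) *
      wick (annih (fBasis lam i k) F) (annih (fBasis lam j k) G) N c x


/-! ### Part A: chain calculus for `pder` -/

namespace PBaux

/-- Composition of partial derivatives along a list of coordinates. -/
def chain {n : ℕ} (L : List (Fin n)) (f : (Fin n → ℝ) → ℝ) : (Fin n → ℝ) → ℝ :=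
  L.foldr pder f

@[simp] lemma chain_nil {n : ℕ} (f : (Fin n → ℝ) → ℝ) : chain [] f = f := rfl

@[simp] lemma chain_cons {n : ℕ} (i : Fin n) (L : List (Fin n)) (f : (Fin n → ℝ) → ℝ) :
    chain (i :: L) f = pder i (chain L f) := rfl

lemma chain_append {n : ℕ} (L₁ L₂ : List (Fin n)) (f : (Fin n → ℝ) → ℝ) :
    chain (L₁ ++ L₂) f = chain L₁ (chain L₂ f) := by
  simp [chain, List.foldr_append]

lemma chain_replicate {n : ℕ} (m : ℕ) (i : Fin n) (f : (Fin n → ℝ) → ℝ) :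
    chain (List.replicate m i) f = (pder i)^[m] f := by
  induction m with
  | zero => rfl
  | succ m ih => rw [List.replicate_succ, chain_cons, ih, Function.iterate_succ_apply']

/-- The canonical list realizing a multi-index. -/
def canonList {n : ℕ} (β : Fin n → ℕ) : List (Fin n) :=
  (List.finRange n).flatMap (fun i => List.replicate (β i) i)

lemma mixedDeriv_eq_chain {n : ℕ} (β : Fin n → ℕ) (f : (Fin n → ℝ) → ℝ) :
    mixedDeriv β f = chain (canonList β) f := by
  show List.foldr _ f _ = _
  unfold canonList
  induction (List.finRange n) with
  | nil => rfl
  | cons i l ih =>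
      rw [List.foldr_cons, List.flatMap_cons, chain_append, chain_replicate, ih]

lemma count_flatMap_repl {n : ℕ} (β : Fin n → ℕ) (i : Fin n) :
    ∀ (l : List (Fin n)), i ∈ l → l.Nodup →
      (l.flatMap (fun j => List.replicate (β j) j)).count i = β i := by
  intro l
  induction l with
  | nil => intro h; simp at h
  | cons j l ih =>
      intro hmem hnd
      rw [List.flatMap_cons, List.count_append, List.count_replicate]
      rcases List.mem_cons.mp hmem with h | h
      · subst h
        have hni : i ∉ l := (List.nodup_cons.mp hnd).1
        have : (l.flatMap (fun j => List.replicate (β j) j)).count i = 0 := by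
          rw [List.count_eq_zero]
          intro hcon
          rcases List.mem_flatMap.mp hcon with ⟨a, ha, hia⟩
          rcases List.eq_of_mem_replicate hia with rfl
          exact hni ha
        simp [this]
      · have hij : ¬ (i = j) := by
          rintro rfl; exact (List.nodup_cons.mp hnd).1 h
        rw [ih h (List.nodup_cons.mp hnd).2]
        have : ¬ ((j == i) = true) := by
          simp
          exact fun h' => absurd h'.symm hij
        rw [if_neg this]
        simp

lemma count_canonList {n : ℕ} (β : Fin n → ℕ) (i : Fin n) :
    (canonList β).count i = β i :=
  count_flatMap_repl β i _ (List.mem_finRange i) (List.nodup_finRange n)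

lemma count_le_of_perm {n : ℕ} {L L' : List (Fin n)} (h : L.Perm L') (i : Fin n) :
    L.count i = L'.count i := h.count_eq i

lemma perm_canonList {n : ℕ} (L : List (Fin n)) :
    L.Perm (canonList (fun i => L.count i)) := by
  rw [List.perm_iff_count]
  intro a
  rw [count_canonList]

end PBaux

namespace PBaux

/-! ### Part B: smooth functions, honest derivatives, Schwarz, periodicity -/

/-- Abbreviation for smoothness as used in `MemConnes`. -/
abbrev Sm {n : ℕ} (f : (Fin n → ℝ) → ℝ) : Prop := ContDiff ℝ (⊤ : ℕ∞) f

lemma update_eq_add_smul {n : ℕ} (x : Fin n → ℝ) (i : Fin n) (t : ℝ) :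
    Function.update x i t = x + (t - x i) • (Pi.single i 1 : Fin n → ℝ) := by
  funext m
  by_cases h : m = i
  · subst h; simp
  · simp [Function.update_apply, h, Pi.single_apply]

lemma hasDerivAt_update {n : ℕ} (x : Fin n → ℝ) (i : Fin n) (t₀ : ℝ) :
    HasDerivAt (fun t => Function.update x i t) (Pi.single i 1 : Fin n → ℝ) t₀ := by
  have h : HasDerivAt (fun t : ℝ => x + (t - x i) • (Pi.single i 1 : Fin n → ℝ))
      ((1:ℝ) • (Pi.single i 1 : Fin n → ℝ)) t₀ :=
    (((hasDerivAt_id t₀).sub_const (x i)).smul_const (Pi.single i 1 : Fin n → ℝ)).const_add x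
  simpa [update_eq_add_smul] using h

lemma hasDerivAt_slice {n : ℕ} {f : (Fin n → ℝ) → ℝ} {x : Fin n → ℝ} {i : Fin n} {t₀ : ℝ}
    (hf : DifferentiableAt ℝ f (Function.update x i t₀)) :
    HasDerivAt (fun t => f (Function.update x i t))
      (fderiv ℝ f (Function.update x i t₀) (Pi.single i 1)) t₀ :=
  hf.hasFDerivAt.comp_hasDerivAt t₀ (hasDerivAt_update x i t₀)

lemma pder_eq_fderiv {n : ℕ} {f : (Fin n → ℝ) → ℝ} {x : Fin n → ℝ} (i : Fin n)
    (hf : DifferentiableAt ℝ f x) :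
    pder i f x = fderiv ℝ f x (Pi.single i 1) := by
  have h := hasDerivAt_slice (f := f) (x := x) (i := i) (t₀ := x i)
    (by rwa [Function.update_eq_self])
  rw [Function.update_eq_self] at h
  exact h.deriv

/-- Honest derivative of the coordinate slice of a differentiable function. -/
lemma sliceD_of_diff {n : ℕ} {f : (Fin n → ℝ) → ℝ} (hf : Differentiable ℝ f)
    (i : Fin n) (x : Fin n → ℝ) (t₀ : ℝ) :
    HasDerivAt (fun t => f (Function.update x i t))
      (pder i f (Function.update x i t₀)) t₀ := by
  have h := hasDerivAt_slice (f := f) (x := Function.update x i t₀) (i := i) (t₀ := t₀)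
    (by rw [Function.update_idem]; exact hf _)
  rw [Function.update_idem] at h
  rw [pder_eq_fderiv i (hf _)]
  simpa [Function.update_idem] using h

lemma contDiff_pder {n : ℕ} {f : (Fin n → ℝ) → ℝ} (hf : Sm f) (i : Fin n) :
    Sm (pder i f) := by
  have hd : Differentiable ℝ f := hf.differentiable (by simp)
  have h : pder i f = fun x => fderiv ℝ f x (Pi.single i 1) :=
    funext fun x => pder_eq_fderiv i (hd x)
  rw [h]
  exact (hf.fderiv_right (by simp)).clm_apply contDiff_const

lemma Sm_chain {n : ℕ} {f : (Fin n → ℝ) → ℝ} (hf : Sm f) (L : List (Fin n)) :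
    Sm (chain L f) := by
  induction L with
  | nil => exact hf
  | cons i L ih => exact contDiff_pder ih i

lemma pder_comm {n : ℕ} {f : (Fin n → ℝ) → ℝ} (hf : Sm f) (i j : Fin n) :
    pder i (pder j f) = pder j (pder i f) := by
  have hd : Differentiable ℝ f := hf.differentiable (by simp)
  have hfd : ContDiff ℝ (⊤ : ℕ∞) (fderiv ℝ f) := hf.fderiv_right (by simp)
  have hdd : Differentiable ℝ (fderiv ℝ f) := hfd.differentiable (by simp)
  have key : ∀ a b : Fin n, ∀ x, pder a (pder b f) x
      = fderiv ℝ (fderiv ℝ f) x (Pi.single a 1) (Pi.single b 1) := by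
    intro a b x
    have h1 : pder b f = fun y => fderiv ℝ f y (Pi.single b 1) :=
      funext fun y => pder_eq_fderiv b (hd y)
    have hdiffb : DifferentiableAt ℝ (fun y => fderiv ℝ f y (Pi.single b 1)) x :=
      ((hfd.clm_apply contDiff_const).differentiable (by simp) x)
    rw [h1, pder_eq_fderiv a hdiffb]
    rw [fderiv_clm_apply (hdd x) (differentiableAt_const _)]
    simp
  funext x
  rw [key i j x, key j i x]
  exact second_derivative_symmetric (f' := fderiv ℝ f)
    (fun y => (hd y).hasFDerivAt) ((hdd x).hasFDerivAt) _ _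

lemma chain_perm {n : ℕ} {f : (Fin n → ℝ) → ℝ} (hf : Sm f) {L L' : List (Fin n)}
    (h : L.Perm L') : chain L f = chain L' f := by
  induction h with
  | nil => rfl
  | cons i h ih => simp [ih]
  | swap i j l => simp [pder_comm (Sm_chain hf l) j i]
  | trans h1 h2 ih1 ih2 => rw [ih1, ih2]

/-- Periodicity in each coordinate. -/
def Per {n : ℕ} (f : (Fin n → ℝ) → ℝ) : Prop :=
  ∀ (x : Fin n → ℝ) (i : Fin n), f (Function.update x i (x i + 1)) = f x

lemma Per.slice_periodic {n : ℕ} {f : (Fin n → ℝ) → ℝ} (hp : Per f)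
    (x : Fin n → ℝ) (i : Fin n) :
    Function.Periodic (fun t => f (Function.update x i t)) 1 := by
  intro t
  have := hp (Function.update x i t) i
  simpa [Function.update_idem] using this

lemma periodic_deriv (f : ℝ → ℝ) (h : Function.Periodic f 1) :
    Function.Periodic (deriv f) 1 := by
  intro t
  have h2 : (fun s => f (s + 1)) = f := funext h
  have h3 := deriv_comp_add_const f 1 t
  rw [h2] at h3
  exact h3.symm

lemma Per.pder {n : ℕ} {f : (Fin n → ℝ) → ℝ} (hp : Per f) (i : Fin n) :
    Per (pder i f) := by
  intro x j
  by_cases h : j = i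
  · subst h
    show deriv (fun t => f (Function.update (Function.update x j (x j + 1)) j t)) _ = _
    have hcol : ∀ t, Function.update (Function.update x j (x j + 1)) j t
        = Function.update x j t := fun t => Function.update_idem ..
    simp only [hcol]
    have hper := periodic_deriv _ (hp.slice_periodic x j)
    have : Function.update x j (x j + 1) j = x j + 1 := Function.update_self ..
    rw [this]
    exact hper (x j)
  · show deriv (fun t => f (Function.update (Function.update x j (x j + 1)) i t)) _ = _
    have hswap : ∀ t, f (Function.update (Function.update x j (x j + 1)) i t)
        = f (Function.update x i t) := by
      intro t
      rw [Function.update_comm h]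
      have h2 := hp (Function.update x i t) j
      have h3 : (Function.update x i t) j = x j := Function.update_of_ne h _ _
      rw [h3] at h2
      exact h2
    simp only [hswap]
    have : Function.update x j (x j + 1) i = x i := Function.update_of_ne (Ne.symm h) _ _
    rw [this]
    rfl

lemma Per.shift_int {n : ℕ} {f : (Fin n → ℝ) → ℝ} (hp : Per f) :
    ∀ (m : ℤ) (x : Fin n → ℝ) (i : Fin n), f (Function.update x i (x i + m)) = f x := by
  have step : ∀ (x : Fin n → ℝ) (i : Fin n) (a : ℝ),
      f (Function.update x i (a + 1)) = f (Function.update x i a) := by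
    intro x i a
    have := hp (Function.update x i a) i
    simpa [Function.update_idem] using this
  intro m
  induction m using Int.induction_on with
  | zero => intro x i; simp
  | succ m ih =>
      intro x i
      have : (x i : ℝ) + ((m:ℤ)+1 : ℤ) = (x i + (m:ℤ)) + 1 := by push_cast; ring
      rw [this, step, ih]
  | pred m ih =>
      intro x i
      have : (x i : ℝ) + (-(m:ℤ)-1 : ℤ) + 1 = x i + (-(m:ℤ) : ℤ) := by push_cast; ring
      calc f (Function.update x i (x i + (-(m:ℤ)-1 : ℤ)))
          = f (Function.update x i (x i + (-(m:ℤ)-1 : ℤ) + 1)) := (step x i _).symm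
        _ = f (Function.update x i (x i + (-(m:ℤ) : ℤ))) := by rw [this]
        _ = f x := ih x i

lemma Per.reduce {n : ℕ} {f : (Fin n → ℝ) → ℝ} (hp : Per f) (x : Fin n → ℝ) :
    f (fun i => Int.fract (x i)) = f x := by
  have key : ∀ (s : Finset (Fin n)),
      f (fun i => if i ∈ s then Int.fract (x i) else x i) = f x := by
    intro s
    induction s using Finset.induction_on with
    | empty => simp
    | @insert j s hj ih =>
        set y : Fin n → ℝ := fun i => if i ∈ s then Int.fract (x i) else x i with hy
        have h1 : (fun i => if i ∈ insert j s then Int.fract (x i) else x i)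
            = Function.update y j (y j + (-⌊x j⌋ : ℤ)) := by
          funext m
          by_cases hm : m = j
          · subst hm
            rw [Function.update_self, if_pos (Finset.mem_insert_self _ _), hy]
            simp only [if_neg hj]
            have hfl := Int.floor_add_fract (x m)
            push_cast
            linarith
          · rw [Function.update_of_ne hm, hy]
            simp only [Finset.mem_insert, hm, false_or]
        rw [h1, hp.shift_int, ih]
  have := key Finset.univ
  simpa using this

lemma bounded_of_per {n : ℕ} {f : (Fin n → ℝ) → ℝ} (hc : Continuous f) (hp : Per f) :
    ∃ M, 0 ≤ M ∧ ∀ x, |f x| ≤ M := by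
  have hK : IsCompact (cube n) := isCompact_univ_pi (fun _ => isCompact_Icc)
  obtain ⟨Cb, hCb⟩ := hK.exists_bound_of_continuousOn hc.continuousOn
  refine ⟨max Cb 0, le_max_right _ _, fun x => ?_⟩
  have hmem : (fun i => Int.fract (x i)) ∈ cube n := by
    intro i _
    exact ⟨Int.fract_nonneg _, (Int.fract_lt_one _).le⟩
  have := hCb _ hmem
  rw [hp.reduce x] at this
  calc |f x| ≤ Cb := by simpa using this
    _ ≤ max Cb 0 := le_max_left _ _

lemma Per_chain {n : ℕ} {f : (Fin n → ℝ) → ℝ} (hp : Per f) (L : List (Fin n)) :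
    Per (chain L f) := by
  induction L with
  | nil => exact hp
  | cons i L ih => exact ih.pder i

end PBaux

namespace PBaux

/-! ### Part C: trigonometric weights, IBP, and the parametric integral -/

noncomputable def sq (lam : ℝ) (κ : ℤ) : ℝ := Real.sqrt (lam * (κ:ℝ)^2 + 1)

noncomputable def trig (κ : ℤ) (t : ℝ) : ℝ :=
  if 0 ≤ κ then Real.cos (2*(κ:ℝ)*Real.pi*t) else Real.sin (2*(κ:ℝ)*Real.pi*t)

noncomputable def wS (lam : ℝ) (κ : ℤ) (t : ℝ) : ℝ := trig κ t / sq lam κ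

noncomputable def DS (lam : ℝ) (κ : ℤ) (t : ℝ) : ℝ :=
  (if 0 ≤ κ then -Real.sin (2*(κ:ℝ)*Real.pi*t) else Real.cos (2*(κ:ℝ)*Real.pi*t))
    * (2*(κ:ℝ)*Real.pi) / sq lam κ

noncomputable def VS (lam : ℝ) (κ : ℤ) (t : ℝ) : ℝ :=
  (if 0 ≤ κ then Real.sin (2*(κ:ℝ)*Real.pi*t) else -Real.cos (2*(κ:ℝ)*Real.pi*t))
    / (2*(κ:ℝ)*Real.pi * sq lam κ)

section trigfacts
variable {lam : ℝ} (κ : ℤ)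

lemma sq_arg_pos (hlam : 0 < lam) : (0:ℝ) < lam * (κ:ℝ)^2 + 1 := by positivity

lemma sq_pos (hlam : 0 < lam) : 0 < sq lam κ := Real.sqrt_pos.mpr (sq_arg_pos κ hlam)

lemma sq_ge_one (hlam : 0 < lam) : 1 ≤ sq lam κ := by
  rw [show (1:ℝ) = Real.sqrt 1 by simp [Real.sqrt_one]]
  apply Real.sqrt_le_sqrt
  nlinarith [sq_nonneg (κ:ℝ), hlam.le]

lemma abs_trig_le (t : ℝ) : |trig κ t| ≤ 1 := by
  unfold trig
  split
  · exact Real.abs_cos_le_one _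
  · exact Real.abs_sin_le_one _

lemma abs_wS_le (hlam : 0 < lam) (t : ℝ) : |wS lam κ t| ≤ 1 / sq lam κ := by
  rw [wS, abs_div, abs_of_pos (sq_pos κ hlam)]
  exact (div_le_div_iff_of_pos_right (sq_pos κ hlam)).mpr (abs_trig_le κ t)

lemma hasDerivAt_linarg (t : ℝ) :
    HasDerivAt (fun t : ℝ => 2*(κ:ℝ)*Real.pi*t) (2*(κ:ℝ)*Real.pi) t := by
  simpa using (hasDerivAt_id t).const_mul (2*(κ:ℝ)*Real.pi)

lemma hasDerivAt_wS (t : ℝ) : HasDerivAt (wS lam κ) (DS lam κ t) t := by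
  unfold wS DS trig
  split
  · exact ((Real.hasDerivAt_cos _).comp t (hasDerivAt_linarg κ t)).div_const _
  · exact ((Real.hasDerivAt_sin _).comp t (hasDerivAt_linarg κ t)).div_const _

lemma hasDerivAt_VS (hlam : 0 < lam) (hκ : κ ≠ 0) (t : ℝ) : HasDerivAt (VS lam κ) (wS lam κ t) t := by
  have hπ : Real.pi ≠ 0 := Real.pi_ne_zero
  have hκR : (κ:ℝ) ≠ 0 := Int.cast_ne_zero.mpr hκ
  have hsq : sq lam κ ≠ 0 := (sq_pos κ hlam).ne'
  unfold VS wS trig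
  split
  · have h := ((Real.hasDerivAt_sin _).comp t (hasDerivAt_linarg κ t)).div_const
      (2*(κ:ℝ)*Real.pi * sq lam κ)
    refine h.congr_deriv ?_
    field_simp
  · have h := (((Real.hasDerivAt_cos _).comp t (hasDerivAt_linarg κ t)).neg).div_const
      (2*(κ:ℝ)*Real.pi * sq lam κ)
    refine h.congr_deriv ?_
    field_simp

lemma trig_periodic (t : ℝ) : trig κ (t + 1) = trig κ t := by
  have harg : 2*(κ:ℝ)*Real.pi*(t+1) = 2*(κ:ℝ)*Real.pi*t + (κ:ℝ) * (2*Real.pi) := by ring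
  unfold trig
  split
  · rw [harg]; exact Real.cos_add_int_mul_two_pi _ κ
  · rw [harg]; exact Real.sin_add_int_mul_two_pi _ κ

lemma wS_periodic (t : ℝ) : wS lam κ (t + 1) = wS lam κ t := by
  unfold wS; rw [trig_periodic]

lemma VS_periodic (t : ℝ) : VS lam κ (t + 1) = VS lam κ t := by
  have harg : 2*(κ:ℝ)*Real.pi*(t+1) = 2*(κ:ℝ)*Real.pi*t + (κ:ℝ) * (2*Real.pi) := by ring
  unfold VS
  split
  · rw [harg, Real.sin_add_int_mul_two_pi _ κ]
  · rw [harg, Real.cos_add_int_mul_two_pi _ κ]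

lemma abs_VS_le (hlam : 0 < lam) (hκ : κ ≠ 0) (t : ℝ) :
    |VS lam κ t| ≤ 1 / (2 * Real.pi * |(κ:ℝ)| * sq lam κ) := by
  have hκR : (0:ℝ) < |(κ:ℝ)| := abs_pos.mpr (Int.cast_ne_zero.mpr hκ)
  have hden : (0:ℝ) < 2 * Real.pi * |(κ:ℝ)| * sq lam κ := by
    have := Real.pi_pos
    have := sq_pos (lam := lam) κ hlam
    positivity
  rw [VS, abs_div]
  have hnum : |if 0 ≤ κ then Real.sin (2*(κ:ℝ)*Real.pi*t) else -Real.cos (2*(κ:ℝ)*Real.pi*t)| ≤ 1 := by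
    split
    · exact Real.abs_sin_le_one _
    · rw [abs_neg]; exact Real.abs_cos_le_one _
  have hdeq : |2*(κ:ℝ)*Real.pi * sq lam κ| = 2 * Real.pi * |(κ:ℝ)| * sq lam κ := by
    rw [abs_mul, abs_mul, abs_mul, abs_two, abs_of_pos Real.pi_pos,
      abs_of_pos (sq_pos κ hlam)]
    ring
  rw [hdeq]
  exact (div_le_div_iff_of_pos_right hden).mpr hnum

lemma continuous_trig : Continuous (trig κ) := by
  unfold trig
  split
  · exact Real.continuous_cos.comp (by continuity)
  · exact Real.continuous_sin.comp (by continuity)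

lemma continuous_wS : Continuous (wS lam κ) :=
  (continuous_trig κ).div_const _

lemma continuous_DS : Continuous (DS lam κ) := by
  unfold DS
  apply Continuous.div_const
  apply Continuous.mul ?_ continuous_const
  split
  · exact (Real.continuous_sin.comp (by continuity)).neg
  · exact Real.continuous_cos.comp (by continuity)

lemma continuous_VS : Continuous (VS lam κ) := by
  unfold VS
  apply Continuous.div_const
  split
  · exact Real.continuous_sin.comp (by continuity)
  · exact (Real.continuous_cos.comp (by continuity)).neg

end trigfacts

/-- Integration by parts for 1-periodic functions on `[0,1]`. -/
lemma ibp_per {u v u' v' : ℝ → ℝ} (hu : ∀ t, HasDerivAt u (u' t) t)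
    (hv : ∀ t, HasDerivAt v (v' t) t)
    (hu' : Continuous u') (hv' : Continuous v')
    (hup : ∀ t, u (t+1) = u t) (hvp : ∀ t, v (t+1) = v t) :
    ∫ t in (0:ℝ)..1, u t * v' t = - ∫ t in (0:ℝ)..1, u' t * v t := by
  have h := intervalIntegral.integral_mul_deriv_eq_deriv_mul
    (fun t _ => hu t) (fun t _ => hv t)
    (hu'.intervalIntegrable 0 1) (hv'.intervalIntegrable 0 1)
  have h1 : u 1 = u 0 := by simpa using hup 0
  have h0 : v 1 = v 0 := by simpa using hvp 0
  rw [h, h1, h0]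
  ring

/-- Parametric integral against a weight. -/
noncomputable def AInt {p : ℕ} (g : (Fin (p+1) → ℝ) → ℝ) (w : ℝ → ℝ) : (Fin p → ℝ) → ℝ :=
  fun x => ∫ s in (0:ℝ)..1, g (Fin.snoc x s) * w s

lemma continuous_snocfun {p : ℕ} (x : Fin p → ℝ) :
    Continuous (fun s : ℝ => (Fin.snoc x s : Fin (p+1) → ℝ)) := by
  apply continuous_pi
  intro j
  refine Fin.lastCases ?_ ?_ j
  · simp only [Fin.snoc_last]; exact continuous_id
  · intro i; simp only [Fin.snoc_castSucc]; exact continuous_const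

/-- 1-periodicity of the `snoc` slice. -/
lemma snoc_slice_periodic {p : ℕ} {g : (Fin (p+1) → ℝ) → ℝ} (hgp : Per g) (x : Fin p → ℝ) :
    ∀ s : ℝ, g (Fin.snoc x (s+1)) = g (Fin.snoc x s) := by
  intro s
  have h1 : (Fin.snoc x (s+1) : Fin (p+1) → ℝ)
      = Function.update (Fin.snoc x s) (Fin.last p)
          ((Fin.snoc x s : Fin (p+1) → ℝ) (Fin.last p) + 1) := by
    rw [Fin.update_snoc_last, Fin.snoc_last]
  rw [h1, hgp]

/-- Honest derivative of the `snoc` slice. -/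
lemma hasDerivAt_snoc_slice {p : ℕ} {g : (Fin (p+1) → ℝ) → ℝ} (hg : Sm g)
    (x : Fin p → ℝ) (s₀ : ℝ) :
    HasDerivAt (fun s => g (Fin.snoc x s)) (pder (Fin.last p) g (Fin.snoc x s₀)) s₀ := by
  have h := sliceD_of_diff (hg.differentiable (by simp)) (Fin.last p) (Fin.snoc x s₀) s₀
  simp only [Fin.update_snoc_last] at h
  exact h

/-- Differentiation under the integral sign for `AInt` slices. -/
lemma hasDerivAt_AInt_slice {p : ℕ} {g : (Fin (p+1) → ℝ) → ℝ} (hg : Sm g) (hgp : Per g)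
    {w : ℝ → ℝ} (hw : Continuous w) (i : Fin p) (x : Fin p → ℝ) (t₀ : ℝ) :
    HasDerivAt (fun t => AInt g w (Function.update x i t))
      (AInt (pder i.castSucc g) w (Function.update x i t₀)) t₀ := by
  obtain ⟨M, hM0, hM⟩ := bounded_of_per (contDiff_pder hg i.castSucc).continuous (hgp.pder _)
  have hFcont : ∀ t : ℝ, Continuous (fun s => g (Fin.snoc (Function.update x i t) s) * w s) :=
    fun t => (hg.continuous.comp (continuous_snocfun _)).mul hw
  have hF'cont : ∀ t : ℝ, Continuous
      (fun s => pder i.castSucc g (Fin.snoc (Function.update x i t) s) * w s) :=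
    fun t => ((contDiff_pder hg i.castSucc).continuous.comp (continuous_snocfun _)).mul hw
  have key := intervalIntegral.hasDerivAt_integral_of_dominated_loc_of_deriv_le
    (𝕜 := ℝ) (μ := MeasureTheory.volume) (a := 0) (b := 1) (s := Metric.ball t₀ 1)
    (F := fun t s => g (Fin.snoc (Function.update x i t) s) * w s)
    (F' := fun t s => pder i.castSucc g (Fin.snoc (Function.update x i t) s) * w s)
    (x₀ := t₀) (bound := fun s => M * |w s|)
    (Metric.ball_mem_nhds t₀ one_pos)
    (Filter.Eventually.of_forall fun t => (hFcont t).aestronglyMeasurable)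
    ((hFcont t₀).intervalIntegrable 0 1)
    ((hF'cont t₀).aestronglyMeasurable)
    (Filter.Eventually.of_forall fun s _ => fun t _ => by
      rw [Real.norm_eq_abs, abs_mul]
      exact mul_le_mul_of_nonneg_right (hM _) (abs_nonneg _))
    ((continuous_const.mul hw.abs).intervalIntegrable 0 1)
    (Filter.Eventually.of_forall fun s _ => fun t _ => by
      have h := (sliceD_of_diff (hg.differentiable (by simp)) i.castSucc
        (Fin.snoc x s) t).mul_const (w s)
      simp only [← Fin.snoc_update] at h
      exact h)
  exact key.2

lemma pder_AInt {p : ℕ} {g : (Fin (p+1) → ℝ) → ℝ} (hg : Sm g) (hgp : Per g)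
    {w : ℝ → ℝ} (hw : Continuous w) (i : Fin p) :
    pder i (AInt g w) = AInt (pder i.castSucc g) w := by
  funext x
  have h := (hasDerivAt_AInt_slice hg hgp hw i x (x i)).deriv
  rw [Function.update_eq_self] at h
  exact h

lemma chain_AInt {p : ℕ} {g : (Fin (p+1) → ℝ) → ℝ} (hg : Sm g) (hgp : Per g)
    {w : ℝ → ℝ} (hw : Continuous w) (L : List (Fin p)) :
    chain L (AInt g w) = AInt (chain (L.map Fin.castSucc) g) w := by
  induction L with
  | nil => rfl
  | cons i L ih =>
      rw [List.map_cons, chain_cons, chain_cons, ih,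
        pder_AInt (Sm_chain hg _) (Per_chain hgp _) hw i]

lemma abs_AInt_le {p : ℕ} {g : (Fin (p+1) → ℝ) → ℝ} {w : ℝ → ℝ} {Mg Mw : ℝ}
    (hMg : ∀ y, |g y| ≤ Mg) (hMw : ∀ s, |w s| ≤ Mw) (x : Fin p → ℝ) :
    |AInt g w x| ≤ Mg * Mw := by
  have h := intervalIntegral.norm_integral_le_of_norm_le_const
    (C := Mg * Mw) (f := fun s => g (Fin.snoc x s) * w s) (a := 0) (b := 1)
    (fun s _ => by
      rw [Real.norm_eq_abs, abs_mul]
      have h0 : (0:ℝ) ≤ Mg := (abs_nonneg _).trans (hMg (Fin.snoc x 0))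
      exact mul_le_mul (hMg _) (hMw _) (abs_nonneg _) h0)
  simpa [AInt] using h

end PBaux

namespace PBaux

/-! ### Part D: bounding chains of kernels by `knorm` -/

lemma knorm_nonneg {ι : Type} [Fintype ι] {m : ℕ} (k : ℕ) (f : ChaosFun ι m) :
    0 ≤ knorm k f :=
  Finset.sum_nonneg fun _ _ => iSup_nonneg fun _ => iSup_nonneg fun _ => abs_nonneg _

lemma abs_chain_le_knorm {d m k3 : ℕ} {f : ChaosFun (Fin d) m}
    (hsm : ∀ c, Sm (f c)) (hper : PeriodicChaos f)
    (L : List (Fin m)) (hL : ∀ i, L.count i ≤ k3)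
    (c : Fin m → Fin d) (x : Fin m → ℝ) :
    |chain L (f c) x| ≤ knorm k3 f := by
  have hPer : ∀ c', Per (f c') := fun c' x' i' => hper c' x' i'
  set β : Fin m → Fin (k3+1) := fun i => ⟨L.count i, Nat.lt_succ_of_le (hL i)⟩ with hβ
  have h1 : ∀ c', chain L (f c') = mixedDeriv (fun i => ((β i : Fin (k3+1)) : ℕ)) (f c') := by
    intro c'
    rw [mixedDeriv_eq_chain]
    exact chain_perm (hsm c') (perm_canonList L)
  -- boundedness of all the relevant mixed derivatives
  have hbd : ∀ c', ∃ M, 0 ≤ M ∧ ∀ y, |mixedDeriv (fun i => ((β i : Fin (k3+1)) : ℕ)) (f c') y| ≤ M := by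
    intro c'
    rw [← h1]
    exact bounded_of_per (Sm_chain (hsm c') L).continuous (Per_chain (hPer c') L)
  have hbd2 : ∀ (β' : Fin m → Fin (k3+1)) (c'), BddAbove (Set.range fun y =>
      |mixedDeriv (fun i => ((β' i : Fin (k3+1)) : ℕ)) (f c') y|) := by
    intro β' c'
    have hcont : Continuous (mixedDeriv (fun i => ((β' i : Fin (k3+1)) : ℕ)) (f c')) := by
      rw [mixedDeriv_eq_chain]; exact (Sm_chain (hsm c') _).continuous
    have hperm : Per (mixedDeriv (fun i => ((β' i : Fin (k3+1)) : ℕ)) (f c')) := by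
      rw [mixedDeriv_eq_chain]; exact Per_chain (hPer c') _
    obtain ⟨M, _, hM⟩ := bounded_of_per hcont hperm
    exact ⟨M, by rintro y ⟨z, rfl⟩; exact hM z⟩
  have step1 : |chain L (f c) x| ≤ ⨆ y, |mixedDeriv (fun i => ((β i : Fin (k3+1)) : ℕ)) (f c) y| := by
    rw [h1 c]
    exact le_ciSup (hbd2 β c) x
  have step2 : (⨆ y, |mixedDeriv (fun i => ((β i : Fin (k3+1)) : ℕ)) (f c) y|)
      ≤ ⨆ c' , ⨆ y, |mixedDeriv (fun i => ((β i : Fin (k3+1)) : ℕ)) (f c') y| := by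
    apply le_ciSup (f := fun c' => ⨆ y, |mixedDeriv (fun i => ((β i : Fin (k3+1)) : ℕ)) (f c') y|)
    exact (Set.finite_range _).bddAbove
  have step3 : (⨆ c', ⨆ y, |mixedDeriv (fun i => ((β i : Fin (k3+1)) : ℕ)) (f c') y|)
      ≤ knorm k3 f := by
    apply Finset.single_le_sum
      (f := fun β' : Fin m → Fin (k3+1) => ⨆ c', ⨆ y, |mixedDeriv (fun i => ((β' i : Fin (k3+1)) : ℕ)) (f c') y|)
      (fun _ _ => iSup_nonneg fun _ => iSup_nonneg fun _ => abs_nonneg _)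
      (Finset.mem_univ β)
  exact step1.trans (step2.trans step3)

end PBaux

namespace PBaux

/-! ### Part E: the annihilation operator against a Fourier mode -/

section annih
variable {d : ℕ} {lam : ℝ} (κ : ℤ)

lemma fBasis_eq (i : Fin d) (t : ℝ) (j : Fin d) :
    fBasis lam i κ t j = wS lam κ t * (if j = i then 1 else 0) := rfl

lemma deriv_fBasis (i : Fin d) (t : ℝ) (j : Fin d) :
    deriv (fun u => fBasis lam i κ u j) t = (if j = i then 1 else 0) * DS lam κ t := by
  by_cases h : j = i
  · subst h
    have hfn : (fun u => fBasis lam j κ u j) = wS lam κ := by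
      funext u; rw [fBasis_eq]; simp
    rw [hfn, if_pos rfl, one_mul]
    exact (hasDerivAt_wS κ t).deriv
  · have hfn : (fun u => fBasis lam i κ u j) = fun _ => (0:ℝ) := by
      funext u; rw [fBasis_eq]; simp [h]
    rw [hfn, if_neg h, zero_mul]
    exact deriv_const t 0

/-- Decomposition of `annih (fBasis lam i κ) F p c` into two weighted integrals. -/
lemma annih_fBasis_eq {p : ℕ} (F : ConnesSeq (Fin d)) (i : Fin d)
    (hsm : ∀ c', Sm (F (p+1) c')) (c : Fin p → Fin d) :
    annih (fBasis lam i κ) F p c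
      = fun x => AInt (F (p+1) (Fin.snoc c i)) (wS lam κ) x
          + AInt (pder (Fin.last p) (F (p+1) (Fin.snoc c i))) (DS lam κ) x := by
  funext x
  show (∫ t in (0:ℝ)..1, ∑ j : Fin d,
      (F (p+1) (Fin.snoc c j) (Fin.snoc x t) * fBasis lam i κ t j +
        pder (Fin.last p) (F (p+1) (Fin.snoc c j)) (Fin.snoc x t) *
          deriv (fun u => fBasis lam i κ u j) t)) = _
  have hint : ∀ t : ℝ, (∑ j : Fin d,
      (F (p+1) (Fin.snoc c j) (Fin.snoc x t) * fBasis lam i κ t j +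
        pder (Fin.last p) (F (p+1) (Fin.snoc c j)) (Fin.snoc x t) *
          deriv (fun u => fBasis lam i κ u j) t))
      = F (p+1) (Fin.snoc c i) (Fin.snoc x t) * wS lam κ t
        + pder (Fin.last p) (F (p+1) (Fin.snoc c i)) (Fin.snoc x t) * DS lam κ t := by
    intro t
    have : ∀ j : Fin d,
        (F (p+1) (Fin.snoc c j) (Fin.snoc x t) * fBasis lam i κ t j +
          pder (Fin.last p) (F (p+1) (Fin.snoc c j)) (Fin.snoc x t) *
            deriv (fun u => fBasis lam i κ u j) t)
        = if j = i then (F (p+1) (Fin.snoc c i) (Fin.snoc x t) * wS lam κ t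
            + pder (Fin.last p) (F (p+1) (Fin.snoc c i)) (Fin.snoc x t) * DS lam κ t) else 0 := by
      intro j
      rw [fBasis_eq, deriv_fBasis]
      by_cases h : j = i
      · subst h; simp
      · simp [h]
    rw [Finset.sum_congr rfl (fun j _ => this j), Finset.sum_ite_eq' Finset.univ i]
    simp
  rw [intervalIntegral.integral_congr (g := fun t =>
      F (p+1) (Fin.snoc c i) (Fin.snoc x t) * wS lam κ t
        + pder (Fin.last p) (F (p+1) (Fin.snoc c i)) (Fin.snoc x t) * DS lam κ t)
      (fun t _ => hint t)]
  have hc1 : Continuous (fun t : ℝ => F (p+1) (Fin.snoc c i) (Fin.snoc x t)) :=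
    (hsm _).continuous.comp (continuous_snocfun x)
  have hc2 : Continuous (fun t : ℝ => pder (Fin.last p) (F (p+1) (Fin.snoc c i)) (Fin.snoc x t)) :=
    (contDiff_pder (hsm _) _).continuous.comp (continuous_snocfun x)
  exact intervalIntegral.integral_add
    ((hc1.mul (continuous_wS κ)).intervalIntegrable 0 1)
    ((hc2.mul (continuous_DS κ)).intervalIntegrable 0 1)

/-- chains pass through the annih function. -/
lemma chain_annih {p : ℕ} (F : ConnesSeq (Fin d)) (i : Fin d)
    (hsm : ∀ c', Sm (F (p+1) c')) (hper : PeriodicChaos (F (p+1)))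
    (c : Fin p → Fin d) (L : List (Fin p)) :
    chain L (annih (fBasis lam i κ) F p c)
      = fun x => AInt (chain (L.map Fin.castSucc) (F (p+1) (Fin.snoc c i))) (wS lam κ) x
          + AInt (chain (L.map Fin.castSucc) (pder (Fin.last p) (F (p+1) (Fin.snoc c i)))) (DS lam κ) x := by
  have hPer : Per (F (p+1) (Fin.snoc c i)) := fun x' i' => hper _ x' i'
  have hSm : Sm (F (p+1) (Fin.snoc c i)) := hsm _
  induction L with
  | nil =>
      rw [chain_nil, annih_fBasis_eq κ F i hsm c]
      rfl
  | cons a L ih =>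
      rw [chain_cons, ih]
      funext x
      have h1 := hasDerivAt_AInt_slice (Sm_chain hSm (L.map Fin.castSucc))
        (Per_chain hPer _) (w := wS lam κ) (continuous_wS κ) a x (x a)
      have h2 := hasDerivAt_AInt_slice (Sm_chain (contDiff_pder hSm (Fin.last p)) (L.map Fin.castSucc))
        (Per_chain (hPer.pder (Fin.last p)) (L.map Fin.castSucc)) (w := DS lam κ) (continuous_DS κ) a x (x a)
      have h3 := (h1.add h2).deriv
      simp only [Function.update_eq_self] at h3
      exact h3

end annih

end PBaux

namespace PBaux

/-! ### Part F: the key IBP bound for chains of the annih function -/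

noncomputable def aK (lam : ℝ) (κ : ℤ) : ℝ :=
  if κ = 0 then 1 else (2*Real.pi*|(κ:ℝ)| * sq lam κ)⁻¹

lemma aK_nonneg {lam : ℝ} (hlam : 0 < lam) (κ : ℤ) : 0 ≤ aK lam κ := by
  unfold aK
  split
  · norm_num
  · have := Real.pi_pos
    have := sq_pos (lam := lam) κ hlam
    positivity

section annBound
variable {d : ℕ} {lam : ℝ}

lemma chain_annih_bound {p k : ℕ} (hlam : 0 < lam) (F : ConnesSeq (Fin d)) (i : Fin d) (κ : ℤ)
    (hsm : ∀ c', Sm (F (p+1) c')) (hper : PeriodicChaos (F (p+1)))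
    (c : Fin p → Fin d) (L : List (Fin p)) (hL : ∀ a, L.count a ≤ k) (x : Fin p → ℝ) :
    |chain L (annih (fBasis lam i κ) F p c) x| ≤ 2 * aK lam κ * knorm (k+3) (F (p+1)) := by
  have hK0 : 0 ≤ knorm (k+3) (F (p+1)) := knorm_nonneg _ _
  set K := knorm (k+3) (F (p+1)) with hK
  set g := F (p+1) (Fin.snoc c i) with hg
  set L' := L.map Fin.castSucc with hL'
  have hSm : Sm g := hsm _
  have hPer : Per g := fun x' i' => hper _ x' i'
  -- count facts
  have hcast : ∀ a : Fin p, L'.count a.castSucc = L.count a :=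
    fun a => List.count_map_of_injective L Fin.castSucc (Fin.castSucc_injective p) a
  have hlast : L'.count (Fin.last p) = 0 := by
    rw [List.count_eq_zero]
    intro hmem
    rcases List.mem_map.mp hmem with ⟨a, _, ha⟩
    exact (Fin.castSucc_lt_last a).ne ha
  -- the three kernels and their count bounds
  have hcnt : ∀ (r : ℕ), r ≤ 3 → ∀ j : Fin (p+1),
      (List.replicate r (Fin.last p) ++ L').count j ≤ k + 3 := by
    intro r hr j
    rw [List.count_append, List.count_replicate]
    refine Fin.lastCases ?_ (fun a => ?_) j
    · rw [hlast]
      split <;> omega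
    · rw [hcast]
      have h1 : ¬ ((Fin.last p) == a.castSucc) = true := by
        simp only [beq_iff_eq]
        exact fun h => (Fin.castSucc_lt_last a).ne h.symm
      rw [if_neg h1]
      have := hL a
      omega
  rw [chain_annih κ F i hsm hper c L]
  rcases eq_or_ne κ 0 with rfl | hκ
  -- κ = 0
  · have hDS0 : ∀ t, DS lam 0 t = 0 := by
      intro t; unfold DS; push_cast; simp
    have h2z : AInt (chain L' (pder (Fin.last p) g)) (DS lam 0) x = 0 := by
      unfold AInt
      rw [intervalIntegral.integral_congr (g := fun _ => (0:ℝ)) (fun t _ => by rw [hDS0]; ring)]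
      simp
    have hsq0 : sq lam 0 = 1 := by unfold sq; push_cast; simp
    have h1b : |AInt (chain L' g) (wS lam 0) x| ≤ K * 1 := by
      apply abs_AInt_le
      · intro y
        have := abs_chain_le_knorm hsm hper L'
          (fun j => by simpa using hcnt 0 (by norm_num) j) (Fin.snoc c i) y
        exact this
      · intro s
        have := abs_wS_le (lam := lam) 0 hlam s
        rwa [hsq0, div_one] at this
    have haK : aK lam 0 = 1 := if_pos rfl
    calc |AInt (chain L' g) (wS lam 0) x + AInt (chain L' (pder (Fin.last p) g)) (DS lam 0) x|
        = |AInt (chain L' g) (wS lam 0) x| := by rw [h2z, add_zero]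
      _ ≤ K * 1 := h1b
      _ ≤ 2 * aK lam 0 * K := by rw [haK]; linarith
  -- κ ≠ 0
  · have hsnoc_u : ∀ (h : (Fin (p+1) → ℝ) → ℝ), Sm h → ∀ s₀,
        HasDerivAt (fun s => h (Fin.snoc x s)) (pder (Fin.last p) h (Fin.snoc x s₀)) s₀ :=
      fun h hh s₀ => hasDerivAt_snoc_slice hh x s₀
    have hVb : ∀ t, |VS lam κ t| ≤ (2*Real.pi*|(κ:ℝ)| * sq lam κ)⁻¹ := by
      intro t
      have := abs_VS_le (lam := lam) κ hlam hκ t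
      rwa [one_div] at this
    have haK : aK lam κ = (2*Real.pi*|(κ:ℝ)| * sq lam κ)⁻¹ := if_neg hκ
    -- term 1
    have e1 : AInt (chain L' g) (wS lam κ) x
        = - ∫ t in (0:ℝ)..1, (chain (Fin.last p :: L') g) (Fin.snoc x t) * VS lam κ t := by
      unfold AInt
      exact ibp_per (u := fun t => chain L' g (Fin.snoc x t)) (v := VS lam κ)
        (hsnoc_u _ (Sm_chain hSm L'))
        (hasDerivAt_VS κ hlam hκ)
        ((Sm_chain (contDiff_pder (Sm_chain hSm L') _) []).continuous.comp (continuous_snocfun x))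
        (continuous_wS κ)
        (snoc_slice_periodic (Per_chain hPer L') x)
        (VS_periodic κ)
    have b1 : |AInt (chain L' g) (wS lam κ) x| ≤ K * aK lam κ := by
      rw [e1, abs_neg, haK]
      have h := intervalIntegral.norm_integral_le_of_norm_le_const
        (C := K * (2*Real.pi*|(κ:ℝ)| * sq lam κ)⁻¹)
        (f := fun t => (chain (Fin.last p :: L') g) (Fin.snoc x t) * VS lam κ t) (a := 0) (b := 1)
        (fun t _ => by
          rw [Real.norm_eq_abs, abs_mul]
          apply mul_le_mul ?_ (hVb t) (abs_nonneg _) hK0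
          have := abs_chain_le_knorm hsm hper (Fin.last p :: L')
            (fun j => by simpa [List.replicate] using hcnt 1 (by norm_num) j) (Fin.snoc c i) (Fin.snoc x t)
          exact this)
      simpa using h
    -- term 2: two integrations by parts
    have e2a : AInt (chain L' (pder (Fin.last p) g)) (DS lam κ) x
        = - ∫ t in (0:ℝ)..1,
            (chain (Fin.last p :: L') (pder (Fin.last p) g)) (Fin.snoc x t) * wS lam κ t := by
      unfold AInt
      exact ibp_per (u := fun t => chain L' (pder (Fin.last p) g) (Fin.snoc x t)) (v := wS lam κ)
        (hsnoc_u _ (Sm_chain (contDiff_pder hSm _) L'))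
        (hasDerivAt_wS κ)
        ((Sm_chain (contDiff_pder (Sm_chain (contDiff_pder hSm _) L') _) []).continuous.comp
          (continuous_snocfun x))
        (continuous_DS κ)
        (snoc_slice_periodic (Per_chain (hPer.pder _) L') x)
        (wS_periodic κ)
    have e2b : ∫ t in (0:ℝ)..1,
          (chain (Fin.last p :: L') (pder (Fin.last p) g)) (Fin.snoc x t) * wS lam κ t
        = - ∫ t in (0:ℝ)..1,
            (chain (Fin.last p :: Fin.last p :: L') (pder (Fin.last p) g)) (Fin.snoc x t)
              * VS lam κ t := by
      exact ibp_per (u := fun t => chain (Fin.last p :: L') (pder (Fin.last p) g) (Fin.snoc x t))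
        (v := VS lam κ)
        (hsnoc_u _ (Sm_chain (contDiff_pder hSm _) (Fin.last p :: L')))
        (hasDerivAt_VS κ hlam hκ)
        ((Sm_chain (contDiff_pder (Sm_chain (contDiff_pder hSm _) (Fin.last p :: L')) _)
          []).continuous.comp (continuous_snocfun x))
        (continuous_wS κ)
        (snoc_slice_periodic (Per_chain (hPer.pder (Fin.last p)) (Fin.last p :: L')) x)
        (VS_periodic κ)
    have hker2 : chain (Fin.last p :: Fin.last p :: L') (pder (Fin.last p) g)
        = chain ((Fin.last p :: Fin.last p :: L') ++ [Fin.last p]) g := by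
      rw [chain_append]
      rfl
    have hcnt2 : ∀ j : Fin (p+1), ((Fin.last p :: Fin.last p :: L') ++ [Fin.last p]).count j ≤ k+3 := by
      intro j
      refine Fin.lastCases ?_ (fun b => ?_) j
      · have h3 : ((Fin.last p :: Fin.last p :: L') ++ [Fin.last p]).count (Fin.last p) = 3 := by
          simp [List.count_append, List.count_cons, hlast]
        omega
      · have hne : (Fin.last p) ≠ b.castSucc := fun h => (Fin.castSucc_lt_last b).ne h.symm
        have h3 : ((Fin.last p :: Fin.last p :: L') ++ [Fin.last p]).count b.castSucc = L.count b := by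
          simp [List.count_append, List.count_cons, hcast, hne]
        have := hL b
        omega
    have b2 : |AInt (chain L' (pder (Fin.last p) g)) (DS lam κ) x| ≤ K * aK lam κ := by
      rw [e2a, e2b, abs_neg, abs_neg, haK]
      have h := intervalIntegral.norm_integral_le_of_norm_le_const
        (C := K * (2*Real.pi*|(κ:ℝ)| * sq lam κ)⁻¹)
        (f := fun t => (chain (Fin.last p :: Fin.last p :: L') (pder (Fin.last p) g)) (Fin.snoc x t)
          * VS lam κ t) (a := 0) (b := 1)
        (fun t _ => by
          rw [Real.norm_eq_abs, abs_mul]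
          apply mul_le_mul ?_ (hVb t) (abs_nonneg _) hK0
          rw [hker2]
          exact abs_chain_le_knorm hsm hper _ hcnt2 (Fin.snoc c i) (Fin.snoc x t))
      simpa using h
    calc |AInt (chain L' g) (wS lam κ) x + AInt (chain L' (pder (Fin.last p) g)) (DS lam κ) x|
        ≤ |AInt (chain L' g) (wS lam κ) x| + |AInt (chain L' (pder (Fin.last p) g)) (DS lam κ) x| :=
          abs_add_le _ _
      _ ≤ K * aK lam κ + K * aK lam κ := add_le_add b1 b2
      _ = 2 * aK lam κ * K := by ring

end annBound

end PBaux

namespace PBaux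

/-! ### Part G: products over disjoint coordinate blocks -/

def pullProd {p q N : ℕ} (e : Fin p → Fin N) (e' : Fin q → Fin N)
    (A : (Fin p → ℝ) → ℝ) (B : (Fin q → ℝ) → ℝ) : (Fin N → ℝ) → ℝ :=
  fun x => A (fun a => x (e a)) * B (fun b => x (e' b))

structure Split (p q N : ℕ) where
  e : Fin p → Fin N
  e' : Fin q → Fin N
  r : Fin N → Sum (Fin p) (Fin q)
  hre : ∀ a, r (e a) = Sum.inl a
  hre' : ∀ b, r (e' b) = Sum.inr b
  hcov : ∀ i, Sum.elim e e' (r i) = i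

namespace Split

variable {p q N : ℕ} (S : Split p q N)

lemma e_inj {a a' : Fin p} (h : S.e a = S.e a') : a = a' := by
  have := congrArg S.r h
  rw [S.hre, S.hre] at this
  exact Sum.inl.inj this

lemma e_ne_e' (a : Fin p) (b : Fin q) : S.e a ≠ S.e' b := by
  intro h
  have := congrArg S.r h
  rw [S.hre, S.hre'] at this
  exact Sum.inl_ne_inr this

lemma comp_update_left (x : Fin N → ℝ) (a : Fin p) (t : ℝ) :
    (fun a' => Function.update x (S.e a) t (S.e a')) = Function.update (fun a' => x (S.e a')) a t := by
  funext a'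
  by_cases h : a' = a
  · subst h; simp
  · have hne : S.e a' ≠ S.e a := fun hh => h (S.e_inj hh)
    rw [Function.update_of_ne hne, Function.update_of_ne h]

lemma comp_update_left' (x : Fin N → ℝ) (a : Fin p) (t : ℝ) :
    (fun b => Function.update x (S.e a) t (S.e' b)) = fun b => x (S.e' b) := by
  funext b
  exact Function.update_of_ne (fun hh => S.e_ne_e' a b hh.symm) _ _

lemma comp_update_right (x : Fin N → ℝ) (b : Fin q) (t : ℝ) :
    (fun b' => Function.update x (S.e' b) t (S.e' b')) = Function.update (fun b' => x (S.e' b')) b t := by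
  funext b'
  by_cases h : b' = b
  · subst h; simp
  · have hne : S.e' b' ≠ S.e' b := by
      intro hh
      have := congrArg S.r hh
      rw [S.hre', S.hre'] at this
      exact h (Sum.inr.inj this)
    rw [Function.update_of_ne hne, Function.update_of_ne h]

lemma comp_update_right' (x : Fin N → ℝ) (b : Fin q) (t : ℝ) :
    (fun a => Function.update x (S.e' b) t (S.e a)) = fun a => x (S.e a) := by
  funext a
  exact Function.update_of_ne (S.e_ne_e' a b) _ _

lemma pder_pullProd_left (A : (Fin p → ℝ) → ℝ) (B : (Fin q → ℝ) → ℝ) (a : Fin p) :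
    pder (S.e a) (pullProd S.e S.e' A B) = pullProd S.e S.e' (pder a A) B := by
  funext x
  show deriv (fun t => A (fun a' => Function.update x (S.e a) t (S.e a'))
      * B (fun b => Function.update x (S.e a) t (S.e' b))) (x (S.e a)) = _
  simp only [S.comp_update_left, S.comp_update_left']
  rw [deriv_mul_const_field']
  rfl

lemma pder_pullProd_right (A : (Fin p → ℝ) → ℝ) (B : (Fin q → ℝ) → ℝ) (b : Fin q) :
    pder (S.e' b) (pullProd S.e S.e' A B) = pullProd S.e S.e' A (pder b B) := by
  funext x
  show deriv (fun t => A (fun a => Function.update x (S.e' b) t (S.e a))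
      * B (fun b' => Function.update x (S.e' b) t (S.e' b'))) (x (S.e' b)) = _
  simp only [S.comp_update_right, S.comp_update_right']
  rw [deriv_const_mul_field']
  rfl

end Split

/-- Slice differentiability with honest `pder` values, everywhere. -/
def SliceD {N : ℕ} (Φ : (Fin N → ℝ) → ℝ) : Prop :=
  ∀ (i : Fin N) (x : Fin N → ℝ) (t : ℝ),
    HasDerivAt (fun s => Φ (Function.update x i s)) (pder i Φ (Function.update x i t)) t

/-- If the slice has an honest derivative given by a formula, `pder` equals that formula. -/
lemma pder_eq_of_hasDerivAt {N : ℕ} {Φ : (Fin N → ℝ) → ℝ} {i : Fin N} {x : Fin N → ℝ} {v : ℝ}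
    (h : HasDerivAt (fun s => Φ (Function.update x i s)) v (x i)) : pder i Φ x = v := by
  have h2 : deriv (fun s => Φ (Function.update x i s)) (x i) = v := h.deriv
  exact h2

lemma sliceD_pullProd {p q N : ℕ} (S : Split p q N) {A : (Fin p → ℝ) → ℝ} {B : (Fin q → ℝ) → ℝ}
    (hA : SliceD A) (hB : SliceD B) : SliceD (pullProd S.e S.e' A B) := by
  intro i x t
  rcases hri : S.r i with a | b
  · have hia : S.e a = i := by
      have := S.hcov i; rw [hri] at this; exact this
    subst hia
    have key : ∀ y : Fin N → ℝ, (fun s => pullProd S.e S.e' A B (Function.update y (S.e a) s))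
        = fun s => A (Function.update (fun a' => y (S.e a')) a s) * B (fun b => y (S.e' b)) := by
      intro y
      funext s
      show A (fun a' => Function.update y (S.e a) s (S.e a')) * B (fun b => Function.update y (S.e a) s (S.e' b)) = _
      rw [S.comp_update_left, S.comp_update_left']
    rw [key]
    have hval : pder (S.e a) (pullProd S.e S.e' A B) (Function.update x (S.e a) t)
        = pder a A (Function.update (fun a' => x (S.e a')) a t) * B (fun b => x (S.e' b)) := by
      rw [S.pder_pullProd_left]
      show pder a A (fun a' => Function.update x (S.e a) t (S.e a'))
          * B (fun b => Function.update x (S.e a) t (S.e' b)) = _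
      rw [S.comp_update_left, S.comp_update_left']
    rw [hval]
    exact (hA a (fun a' => x (S.e a')) t).mul_const _
  · have hib : S.e' b = i := by
      have := S.hcov i; rw [hri] at this; exact this
    subst hib
    have key : ∀ y : Fin N → ℝ, (fun s => pullProd S.e S.e' A B (Function.update y (S.e' b) s))
        = fun s => A (fun a => y (S.e a)) * B (Function.update (fun b' => y (S.e' b')) b s) := by
      intro y
      funext s
      show A (fun a => Function.update y (S.e' b) s (S.e a)) * B (fun b' => Function.update y (S.e' b) s (S.e' b')) = _
      rw [S.comp_update_right, S.comp_update_right']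
    rw [key]
    have hval : pder (S.e' b) (pullProd S.e S.e' A B) (Function.update x (S.e' b) t)
        = A (fun a => x (S.e a)) * pder b B (Function.update (fun b' => x (S.e' b')) b t) := by
      rw [S.pder_pullProd_right]
      show A (fun a => Function.update x (S.e' b) t (S.e a))
          * pder b B (fun b' => Function.update x (S.e' b) t (S.e' b')) = _
      rw [S.comp_update_right, S.comp_update_right']
    rw [hval]
    exact ((hB b (fun b' => x (S.e' b')) t).const_mul _)

/-- Chains pass through `pullProd`, splitting into the two blocks. -/
lemma chain_pullProd {p q N : ℕ} (S : Split p q N) (A : (Fin p → ℝ) → ℝ) (B : (Fin q → ℝ) → ℝ)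
    (L : List (Fin N)) :
    chain L (pullProd S.e S.e' A B)
      = pullProd S.e S.e' (chain (L.filterMap (fun i => (S.r i).getLeft?)) A)
          (chain (L.filterMap (fun i => (S.r i).getRight?)) B) := by
  induction L with
  | nil => rfl
  | cons i L ih =>
      rw [chain_cons, ih, List.filterMap_cons, List.filterMap_cons]
      rcases hri : S.r i with a | b
      · have hia : S.e a = i := by have := S.hcov i; rw [hri] at this; exact this
        simp only [Sum.getLeft?_inl, Sum.getRight?_inl]
        rw [← hia, S.pder_pullProd_left]
        rfl
      · have hib : S.e' b = i := by have := S.hcov i; rw [hri] at this; exact this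
        simp only [Sum.getLeft?_inr, Sum.getRight?_inr]
        rw [← hib, S.pder_pullProd_right]
        rfl

lemma count_filterMap_left {p q N : ℕ} (S : Split p q N) (L : List (Fin N)) (a : Fin p) :
    (L.filterMap (fun i => (S.r i).getLeft?)).count a = L.count (S.e a) := by
  induction L with
  | nil => rfl
  | cons i L ih =>
      rw [List.filterMap_cons, List.count_cons]
      rcases hri : S.r i with a' | b
      · have hia : S.e a' = i := by have := S.hcov i; rw [hri] at this; exact this
        simp only [Sum.getLeft?_inl]
        rw [List.count_cons, ih]
        congr 1
        by_cases h : a' = a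
        · subst h; rw [if_pos (by simp), if_pos (by simp [hia.symm])]
        · rw [if_neg (by simpa using h), if_neg (by
            simp only [beq_iff_eq]
            rw [← hia]
            exact fun hh => h (S.e_inj hh))]
      · have hib : S.e' b = i := by have := S.hcov i; rw [hri] at this; exact this
        simp only [Sum.getLeft?_inr]
        rw [ih]
        have : ¬ (i == S.e a) = true := by
          simp only [beq_iff_eq]
          rw [← hib]
          exact fun hh => S.e_ne_e' a b hh.symm
        rw [if_neg this, add_zero]

lemma count_filterMap_right {p q N : ℕ} (S : Split p q N) (L : List (Fin N)) (b : Fin q) :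
    (L.filterMap (fun i => (S.r i).getRight?)).count b = L.count (S.e' b) := by
  induction L with
  | nil => rfl
  | cons i L ih =>
      rw [List.filterMap_cons, List.count_cons]
      rcases hri : S.r i with a | b'
      · have hia : S.e a = i := by have := S.hcov i; rw [hri] at this; exact this
        simp only [Sum.getRight?_inl]
        rw [ih]
        have : ¬ (i == S.e' b) = true := by
          simp only [beq_iff_eq]
          rw [← hia]
          exact S.e_ne_e' a b
        rw [if_neg this, add_zero]
      · have hib : S.e' b' = i := by have := S.hcov i; rw [hri] at this; exact this
        simp only [Sum.getRight?_inr]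
        rw [List.count_cons, ih]
        congr 1
        by_cases h : b' = b
        · subst h; rw [if_pos (by simp), if_pos (by simp [hib.symm])]
        · rw [if_neg (by simpa using h), if_neg (by
            simp only [beq_iff_eq]
            rw [← hib]
            intro hh
            have := congrArg S.r hh
            rw [S.hre', S.hre'] at this
            exact h (Sum.inr.inj this))]

/-! sums and scalar multiples -/

lemma pder_const_mul {N : ℕ} (c : ℝ) (Φ : (Fin N → ℝ) → ℝ) (i : Fin N) :
    pder i (fun x => c * Φ x) = fun x => c * pder i Φ x := by
  funext x
  show deriv (fun t => c * Φ (Function.update x i t)) (x i) = _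
  rw [deriv_const_mul_field']
  rfl

lemma chain_const_mul {N : ℕ} (c : ℝ) (Φ : (Fin N → ℝ) → ℝ) (L : List (Fin N)) :
    chain L (fun x => c * Φ x) = fun x => c * chain L Φ x := by
  induction L with
  | nil => rfl
  | cons i L ih => rw [chain_cons, ih, pder_const_mul, chain_cons]

lemma sliceD_const_mul {N : ℕ} (c : ℝ) {Φ : (Fin N → ℝ) → ℝ} (h : SliceD Φ) :
    SliceD (fun x => c * Φ x) := by
  intro i x t
  rw [pder_const_mul]
  exact (h i x t).const_mul c

lemma pder_finsetSum {N : ℕ} {α : Type*} (s : Finset α) (Φ : α → (Fin N → ℝ) → ℝ)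
    (hΦ : ∀ m ∈ s, SliceD (Φ m)) (i : Fin N) :
    pder i (fun x => ∑ m ∈ s, Φ m x) = fun x => ∑ m ∈ s, pder i (Φ m) x := by
  funext x
  show deriv (fun t => ∑ m ∈ s, Φ m (Function.update x i t)) (x i) = _
  have h := HasDerivAt.fun_sum (fun m hm => hΦ m hm i x (x i))
  have h2 := h.deriv
  rw [h2]
  congr 1
  funext m
  rw [Function.update_eq_self]

lemma sliceD_finsetSum {N : ℕ} {α : Type*} (s : Finset α) (Φ : α → (Fin N → ℝ) → ℝ)
    (hΦ : ∀ m ∈ s, SliceD (Φ m)) : SliceD (fun x => ∑ m ∈ s, Φ m x) := by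
  intro i x t
  rw [pder_finsetSum s Φ hΦ]
  exact HasDerivAt.fun_sum (fun m hm => hΦ m hm i x t)

lemma chain_finsetSum {N : ℕ} {α : Type*} (s : Finset α) (Φ : α → (Fin N → ℝ) → ℝ)
    (hΦ : ∀ m ∈ s, ∀ L, SliceD (chain L (Φ m))) (L : List (Fin N)) :
    chain L (fun x => ∑ m ∈ s, Φ m x) = fun x => ∑ m ∈ s, chain L (Φ m) x := by
  induction L with
  | nil => rfl
  | cons i L ih =>
      rw [chain_cons, ih, pder_finsetSum s _ (fun m hm => hΦ m hm L)]
      rfl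

/-- Deep slice differentiability: all chains have honest slice derivatives. -/
def DeepD {N : ℕ} (Φ : (Fin N → ℝ) → ℝ) : Prop := ∀ L, SliceD (chain L Φ)

lemma deepD_const_mul {N : ℕ} (c : ℝ) {Φ : (Fin N → ℝ) → ℝ} (h : DeepD Φ) :
    DeepD (fun x => c * Φ x) := by
  intro L
  rw [chain_const_mul]
  exact sliceD_const_mul c (h L)

lemma deepD_finsetSum {N : ℕ} {α : Type*} (s : Finset α) (Φ : α → (Fin N → ℝ) → ℝ)
    (hΦ : ∀ m ∈ s, DeepD (Φ m)) : DeepD (fun x => ∑ m ∈ s, Φ m x) := by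
  intro L
  rw [chain_finsetSum s Φ (fun m hm => hΦ m hm)]
  exact sliceD_finsetSum s _ (fun m hm => hΦ m hm L)

lemma deepD_pullProd {p q N : ℕ} (S : Split p q N) {A : (Fin p → ℝ) → ℝ} {B : (Fin q → ℝ) → ℝ}
    (hA : DeepD A) (hB : DeepD B) : DeepD (pullProd S.e S.e' A B) := by
  intro L
  rw [chain_pullProd]
  exact sliceD_pullProd S (hA _) (hB _)

end PBaux

namespace PBaux

/-! ### Part H: DeepD for annih, the wick splitting, and the wick chain bound -/

lemma sliceD_AIntSum {p : ℕ} {g g' : (Fin (p+1) → ℝ) → ℝ} (hg : Sm g) (hgp : Per g)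
    (hg' : Sm g') (hgp' : Per g') {w w' : ℝ → ℝ} (hw : Continuous w) (hw' : Continuous w') :
    SliceD (fun x => AInt g w x + AInt g' w' x) := by
  intro i x t
  have hval : ∀ y : Fin p → ℝ, pder i (fun x => AInt g w x + AInt g' w' x) y
      = AInt (pder i.castSucc g) w y + AInt (pder i.castSucc g') w' y := by
    intro y
    apply pder_eq_of_hasDerivAt
    have h := (hasDerivAt_AInt_slice hg hgp hw i y (y i)).add
      (hasDerivAt_AInt_slice hg' hgp' hw' i y (y i))
    simpa only [Function.update_eq_self, Pi.add_def] using h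
  rw [hval]
  exact (hasDerivAt_AInt_slice hg hgp hw i x t).add (hasDerivAt_AInt_slice hg' hgp' hw' i x t)

section annD
variable {d : ℕ} {lam : ℝ} (κ : ℤ)

lemma deepD_annih {p : ℕ} (F : ConnesSeq (Fin d)) (i : Fin d)
    (hsm : ∀ c', Sm (F (p+1) c')) (hper : PeriodicChaos (F (p+1))) (c' : Fin p → Fin d) :
    DeepD (annih (fBasis lam i κ) F p c') := by
  intro L
  have hPer : Per (F (p+1) (Fin.snoc c' i)) := fun x' i' => hper _ x' i'
  rw [chain_annih κ F i hsm hper c' L]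
  exact sliceD_AIntSum (Sm_chain (hsm _) _) (Per_chain hPer _)
    (Sm_chain (contDiff_pder (hsm _) (Fin.last p)) _)
    (Per_chain (hPer.pder (Fin.last p)) _)
    (continuous_wS κ) (continuous_DS κ)

end annD

/-- The coordinate split of `Fin N` induced by a permutation `σ` and a cut `m`. -/
def wickSplit (N m : ℕ) (hm : m + (N - m) = N) (σ : Equiv.Perm (Fin (m + (N - m)))) :
    Split m (N - m) N where
  e a := Fin.cast hm (σ (Fin.castAdd (N - m) a))
  e' b := Fin.cast hm (σ (Fin.natAdd m b))
  r i := if h : ((σ.symm (Fin.cast hm.symm i)) : ℕ) < m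
    then Sum.inl ⟨(σ.symm (Fin.cast hm.symm i) : ℕ), h⟩
    else Sum.inr ⟨(σ.symm (Fin.cast hm.symm i) : ℕ) - m, by
      have := (σ.symm (Fin.cast hm.symm i)).isLt; omega⟩
  hre := by
    intro a
    have h1 : σ.symm (Fin.cast hm.symm (Fin.cast hm (σ (Fin.castAdd (N - m) a))))
        = Fin.castAdd (N - m) a := by
      have h2 : Fin.cast hm.symm (Fin.cast hm (σ (Fin.castAdd (N - m) a)))
          = σ (Fin.castAdd (N - m) a) := Fin.ext (by simp)
      rw [h2, Equiv.symm_apply_apply]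
    simp only [h1]
    rw [dif_pos (by simpa using a.isLt)]
    exact congrArg Sum.inl (Fin.ext (by simp))
  hre' := by
    intro b
    have h1 : σ.symm (Fin.cast hm.symm (Fin.cast hm (σ (Fin.natAdd m b)))) = Fin.natAdd m b := by
      have h2 : Fin.cast hm.symm (Fin.cast hm (σ (Fin.natAdd m b))) = σ (Fin.natAdd m b) :=
        Fin.ext (by simp)
      rw [h2, Equiv.symm_apply_apply]
    simp only [h1]
    rw [dif_neg (by simp only [Fin.coe_natAdd]; omega)]
    exact congrArg Sum.inr (Fin.ext (by simp only [Fin.coe_natAdd]; omega))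
  hcov := by
    intro i
    by_cases h : ((σ.symm (Fin.cast hm.symm i)) : ℕ) < m
    · rw [dif_pos h, Sum.elim_inl]
      have h2 : Fin.castAdd (N - m) (⟨(σ.symm (Fin.cast hm.symm i) : ℕ), h⟩ : Fin m)
          = σ.symm (Fin.cast hm.symm i) := Fin.ext (by simp)
      rw [h2, Equiv.apply_symm_apply]
      exact Fin.ext (by simp)
    · rw [dif_neg h, Sum.elim_inr]
      have h2 : Fin.natAdd m (⟨(σ.symm (Fin.cast hm.symm i) : ℕ) - m,
            by have := (σ.symm (Fin.cast hm.symm i)).isLt; omega⟩ : Fin (N - m))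
          = σ.symm (Fin.cast hm.symm i) := Fin.ext (by simp only [Fin.coe_natAdd]; omega)
      rw [h2, Equiv.apply_symm_apply]
      exact Fin.ext (by simp)

section wicksec
variable {d : ℕ} {lam : ℝ} (κ : ℤ) (N : ℕ) (c : Fin N → Fin d)
variable (F G : ConnesSeq (Fin d)) (i j : Fin d)

/-- Representation of the Wick product of two annihilated series as a finite sum of
`pullProd`s. -/
lemma wick_rep :
    (fun x => wick (annih (fBasis lam i κ) F) (annih (fBasis lam j κ) G) N c x)
      = fun x => ∑ m ∈ (Finset.range (N+1)).attach,
          ((((m:ℕ) + (N - (m:ℕ))).factorial : ℝ))⁻¹ *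
            ∑ σ : Equiv.Perm (Fin ((m:ℕ) + (N - (m:ℕ)))),
              pullProd (wickSplit N (m:ℕ) (by have := Finset.mem_range.mp m.2; omega) σ).e
                (wickSplit N (m:ℕ) (by have := Finset.mem_range.mp m.2; omega) σ).e'
                (annih (fBasis lam i κ) F (m:ℕ)
                  (fun a => c ((wickSplit N (m:ℕ) (by have := Finset.mem_range.mp m.2; omega) σ).e a)))
                (annih (fBasis lam j κ) G (N - (m:ℕ))
                  (fun b => c ((wickSplit N (m:ℕ) (by have := Finset.mem_range.mp m.2; omega) σ).e' b)))
                x := rfl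

variable (hFsm : ∀ m c', Sm (F m c')) (hFper : ∀ m, PeriodicChaos (F m))
variable (hGsm : ∀ m c', Sm (G m c')) (hGper : ∀ m, PeriodicChaos (G m))

include hFsm hFper hGsm hGper in
lemma deepD_wick :
    DeepD (fun x => wick (annih (fBasis lam i κ) F) (annih (fBasis lam j κ) G) N c x) := by
  rw [wick_rep]
  apply deepD_finsetSum
  intro m _
  apply deepD_const_mul
  apply deepD_finsetSum
  intro σ _
  exact deepD_pullProd _ (deepD_annih κ F i (hFsm _) (hFper _) _)
    (deepD_annih κ G j (hGsm _) (hGper _) _)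

include hFsm hFper hGsm hGper in
lemma chain_wick_bound (hlam : 0 < lam) (k : ℕ) (L : List (Fin N)) (hL : ∀ a, L.count a ≤ k)
    (x : Fin N → ℝ) :
    |chain L (fun y => wick (annih (fBasis lam i κ) F) (annih (fBasis lam j κ) G) N c y) x|
      ≤ ∑ m ∈ Finset.range (N+1),
          (2 * aK lam κ * knorm (k+3) (F (m+1))) * (2 * aK lam κ * knorm (k+3) (G (N-m+1))) := by
  have hDD : ∀ m ∈ (Finset.range (N+1)).attach, DeepD (fun y =>
      ((((m:ℕ) + (N - (m:ℕ))).factorial : ℝ))⁻¹ *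
        ∑ σ : Equiv.Perm (Fin ((m:ℕ) + (N - (m:ℕ)))),
          pullProd (wickSplit N (m:ℕ) (by have := Finset.mem_range.mp m.2; omega) σ).e
            (wickSplit N (m:ℕ) (by have := Finset.mem_range.mp m.2; omega) σ).e'
            (annih (fBasis lam i κ) F (m:ℕ)
              (fun a => c ((wickSplit N (m:ℕ) (by have := Finset.mem_range.mp m.2; omega) σ).e a)))
            (annih (fBasis lam j κ) G (N - (m:ℕ))
              (fun b => c ((wickSplit N (m:ℕ) (by have := Finset.mem_range.mp m.2; omega) σ).e' b)))
          y) := by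
    intro m _
    apply deepD_const_mul
    apply deepD_finsetSum
    intro σ _
    exact deepD_pullProd _ (deepD_annih κ F i (hFsm _) (hFper _) _)
      (deepD_annih κ G j (hGsm _) (hGper _) _)
  rw [wick_rep, chain_finsetSum _ _ (fun m hm => hDD m hm)]
  have hterm : ∀ (m : {y // y ∈ Finset.range (N+1)}),
      |chain L (fun y => ((((m:ℕ) + (N - (m:ℕ))).factorial : ℝ))⁻¹ *
        ∑ σ : Equiv.Perm (Fin ((m:ℕ) + (N - (m:ℕ)))),
          pullProd (wickSplit N (m:ℕ) (by have := Finset.mem_range.mp m.2; omega) σ).e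
            (wickSplit N (m:ℕ) (by have := Finset.mem_range.mp m.2; omega) σ).e'
            (annih (fBasis lam i κ) F (m:ℕ)
              (fun a => c ((wickSplit N (m:ℕ) (by have := Finset.mem_range.mp m.2; omega) σ).e a)))
            (annih (fBasis lam j κ) G (N - (m:ℕ))
              (fun b => c ((wickSplit N (m:ℕ) (by have := Finset.mem_range.mp m.2; omega) σ).e' b)))
          y) x|
      ≤ (2 * aK lam κ * knorm (k+3) (F ((m:ℕ)+1))) * (2 * aK lam κ * knorm (k+3) (G (N-(m:ℕ)+1))) := by
    intro m
    have hKF := knorm_nonneg (k+3) (F ((m:ℕ)+1))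
    have hKG := knorm_nonneg (k+3) (G (N-(m:ℕ)+1))
    have haK := aK_nonneg hlam κ
    set B : ℝ := (2 * aK lam κ * knorm (k+3) (F ((m:ℕ)+1)))
      * (2 * aK lam κ * knorm (k+3) (G (N-(m:ℕ)+1))) with hB
    have hB0 : 0 ≤ B := by positivity
    rw [chain_const_mul]
    rw [chain_finsetSum _ _ (fun σ _ => deepD_pullProd _
      (deepD_annih κ F i (hFsm _) (hFper _) _) (deepD_annih κ G j (hGsm _) (hGper _) _))]
    have hb : ∀ σ : Equiv.Perm (Fin ((m:ℕ) + (N - (m:ℕ)))),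
        |chain L (pullProd (wickSplit N (m:ℕ) (by have := Finset.mem_range.mp m.2; omega) σ).e
            (wickSplit N (m:ℕ) (by have := Finset.mem_range.mp m.2; omega) σ).e'
            (annih (fBasis lam i κ) F (m:ℕ)
              (fun a => c ((wickSplit N (m:ℕ) (by have := Finset.mem_range.mp m.2; omega) σ).e a)))
            (annih (fBasis lam j κ) G (N - (m:ℕ))
              (fun b => c ((wickSplit N (m:ℕ) (by have := Finset.mem_range.mp m.2; omega) σ).e' b)))) x|
        ≤ B := by
      intro σ
      rw [chain_pullProd]
      have hsplit : ∀ (A : (Fin (m:ℕ) → ℝ) → ℝ) (Bb : (Fin (N - (m:ℕ)) → ℝ) → ℝ)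
          (e : Fin (m:ℕ) → Fin N) (e' : Fin (N - (m:ℕ)) → Fin N),
          pullProd e e' A Bb x = A (fun a => x (e a)) * Bb (fun b => x (e' b)) := fun _ _ _ _ => rfl
      rw [hsplit, abs_mul, hB]
      apply mul_le_mul
      · exact chain_annih_bound hlam F i κ (hFsm _) (hFper _) _ _
          (fun a => by rw [count_filterMap_left]; exact hL _) _
      · exact chain_annih_bound hlam G j κ (hGsm _) (hGper _) _ _
          (fun b => by rw [count_filterMap_right]; exact hL _) _
      · exact abs_nonneg _
      · positivity
    have hfct0 : (0:ℝ) < (((m:ℕ) + (N - (m:ℕ))).factorial : ℝ) :=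
      Nat.cast_pos.mpr (Nat.factorial_pos _)
    calc |((((m:ℕ) + (N - (m:ℕ))).factorial : ℝ))⁻¹ * ∑ σ, chain L (pullProd _ _ _ _) x|
        = ((((m:ℕ) + (N - (m:ℕ))).factorial : ℝ))⁻¹ * |∑ σ, chain L (pullProd _ _ _ _) x| := by
          rw [abs_mul, abs_inv, Nat.abs_cast]
      _ ≤ ((((m:ℕ) + (N - (m:ℕ))).factorial : ℝ))⁻¹ * ((((m:ℕ) + (N - (m:ℕ))).factorial : ℝ) * B) := by
          apply mul_le_mul_of_nonneg_left ?_ (by positivity)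
          refine (Finset.abs_sum_le_sum_abs _ _).trans ?_
          have h2 := Finset.sum_le_card_nsmul Finset.univ _ B (fun σ _ => hb σ)
          rw [Finset.card_univ, Fintype.card_perm, Fintype.card_fin, nsmul_eq_mul] at h2
          exact h2
      _ = B := by
          rw [← mul_assoc, inv_mul_cancel₀ hfct0.ne', one_mul]
  refine le_trans (Finset.abs_sum_le_sum_abs _ _) ?_
  refine le_trans (Finset.sum_le_sum (fun m _ => hterm m)) ?_
  exact le_of_eq (Finset.sum_attach (Finset.range (N+1)) (fun m =>
    (2 * aK lam κ * knorm (k+3) (F (m+1))) * (2 * aK lam κ * knorm (k+3) (G (N-m+1)))))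

end wicksec

end PBaux

namespace PBaux

/-! ### Part I: summability and the knorm bound for the Poisson bracket -/

lemma summable_invquad (C : ℝ) (hC : 0 < C) :
    Summable (fun κ : ℤ => (C * (κ:ℝ)^2 + 1)⁻¹) := by
  have hbase : Summable (fun κ : ℤ => ((κ:ℝ)^2)⁻¹) := by
    have := (Real.summable_one_div_int_pow (p := 2)).mpr one_lt_two
    simpa [one_div] using this
  have h1 : Summable (fun κ : ℤ => (C⁻¹) * ((κ:ℝ)^2)⁻¹ + (if κ = 0 then (1:ℝ) else 0)) :=
    (hbase.mul_left C⁻¹).add (summable_of_ne_finset_zero (s := {(0:ℤ)})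
      (fun b hb => by simp only [Finset.mem_singleton] at hb; simp [hb]))
  apply Summable.of_nonneg_of_le (fun κ => by positivity) ?_ h1
  intro κ
  rcases eq_or_ne κ 0 with rfl | hκ
  · simp
  · have hκ2 : (0:ℝ) < (κ:ℝ)^2 := by
      have : (κ:ℝ) ≠ 0 := Int.cast_ne_zero.mpr hκ
      positivity
    rw [if_neg hκ, add_zero, ← mul_inv]
    apply inv_anti₀ (by positivity)
    linarith

noncomputable def tK (lam : ℝ) (κ : ℤ) : ℝ := (lam*(κ:ℝ)^2+1) * 4 * (aK lam κ)^2

lemma tK_nonneg {lam : ℝ} (hlam : 0 < lam) (κ : ℤ) : 0 ≤ tK lam κ := by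
  have h1 := aK_nonneg hlam κ
  have h2 := sq_arg_pos κ hlam
  unfold tK
  positivity

lemma summable_tK {lam : ℝ} (hlam : 0 < lam) : Summable (tK lam) := by
  have hbase : Summable (fun κ : ℤ => ((κ:ℝ)^2)⁻¹) := by
    have := (Real.summable_one_div_int_pow (p := 2)).mpr one_lt_two
    simpa [one_div] using this
  have h1 : Summable (fun κ : ℤ => ((Real.pi^2)⁻¹) * ((κ:ℝ)^2)⁻¹ + (if κ = 0 then (4:ℝ) else 0)) :=
    (hbase.mul_left _).add (summable_of_ne_finset_zero (s := {(0:ℤ)})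
      (fun b hb => by simp only [Finset.mem_singleton] at hb; simp [hb]))
  apply Summable.of_nonneg_of_le (fun κ => tK_nonneg hlam κ) ?_ h1
  intro κ
  rcases eq_or_ne κ 0 with rfl | hκ
  · have : tK lam 0 = 4 := by
      unfold tK aK
      rw [if_pos rfl]
      push_cast
      ring
    rw [this]
    simp
  · have hκR : (κ:ℝ) ≠ 0 := Int.cast_ne_zero.mpr hκ
    have hπ := Real.pi_pos
    have hsq := sq_pos (lam := lam) κ hlam
    have harg := sq_arg_pos (lam := lam) κ hlam
    have heq : tK lam κ = (Real.pi^2 * (κ:ℝ)^2)⁻¹ := by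
      unfold tK aK
      rw [if_neg hκ]
      have h1 : sq lam κ^2 = lam*(κ:ℝ)^2+1 := Real.sq_sqrt harg.le
      rw [inv_pow]
      rw [mul_pow, mul_pow, sq_abs, h1]
      field_simp
      ring
    rw [heq, if_neg hκ, add_zero, ← mul_inv]

/-- Sum of absolute values of matrix entries. -/
noncomputable def Sabs {d : ℕ} (M : Matrix (Fin d) (Fin d) ℝ) : ℝ := ∑ i, ∑ j, |M i j|

lemma Sabs_nonneg {d : ℕ} (M : Matrix (Fin d) (Fin d) ℝ) : 0 ≤ Sabs M :=
  Finset.sum_nonneg fun _ _ => Finset.sum_nonneg fun _ _ => abs_nonneg _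

/-- The quadratic form in the norms of `F` and `G`. -/
noncomputable def Qsum {d : ℕ} (k3 : ℕ) (F G : ConnesSeq (Fin d)) (N : ℕ) : ℝ :=
  ∑ m ∈ Finset.range (N+1), knorm k3 (F (m+1)) * knorm k3 (G (N-m+1))

lemma Qsum_nonneg {d : ℕ} (k3 : ℕ) (F G : ConnesSeq (Fin d)) (N : ℕ) : 0 ≤ Qsum k3 F G N :=
  Finset.sum_nonneg fun _ _ => mul_nonneg (knorm_nonneg _ _) (knorm_nonneg _ _)

section master
variable {d : ℕ} {lam : ℝ} (ω : Matrix (Fin d) (Fin d) ℝ) (F G : ConnesSeq (Fin d)) (N : ℕ)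
  (c : Fin N → Fin d)

/-- The `κ`-th term of the Poisson bracket as a function of `x`. -/
noncomputable def PsiFun (lam' : ℝ) (κ : ℤ) : (Fin N → ℝ) → ℝ :=
  fun x => ∑ i : Fin d, ∑ j : Fin d,
    (lam' * (κ:ℝ)^2 + 1) * (ω⁻¹ i j) *
      wick (annih (fBasis lam' i κ) F) (annih (fBasis lam' j κ) G) N c x

lemma PB_eq_tsum_Psi :
    poissonBracket lam ω F G N c = fun x => ∑' κ : ℤ, PsiFun ω F G N c lam κ x := rfl

variable (hFsm : ∀ m c', Sm (F m c')) (hFper : ∀ m, PeriodicChaos (F m))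
variable (hGsm : ∀ m c', Sm (G m c')) (hGper : ∀ m, PeriodicChaos (G m))

include hFsm hFper hGsm hGper in
lemma deepD_Psi (κ : ℤ) : DeepD (PsiFun ω F G N c lam κ) := by
  unfold PsiFun
  apply deepD_finsetSum
  intro i _
  apply deepD_finsetSum
  intro j _
  exact deepD_const_mul _ (deepD_wick κ N c F G i j hFsm hFper hGsm hGper)

include hFsm hFper hGsm hGper in
lemma chain_Psi_bound (hlam : 0 < lam) (k : ℕ) (κ : ℤ) (L : List (Fin N))
    (hL : ∀ a, L.count a ≤ k) (x : Fin N → ℝ) :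
    |chain L (PsiFun ω F G N c lam κ) x| ≤ tK lam κ * (Sabs ω⁻¹ * Qsum (k+3) F G N) := by
  have harg := sq_arg_pos (lam := lam) κ hlam
  have haK := aK_nonneg hlam κ
  have hQ := Qsum_nonneg (d := d) (k+3) F G N
  unfold PsiFun
  rw [chain_finsetSum _ _ (fun i _ => fun L' => (deepD_finsetSum _ _ (fun j _ =>
    deepD_const_mul _ (deepD_wick κ N c F G i j hFsm hFper hGsm hGper))) L')]
  set W : ℝ := ∑ m ∈ Finset.range (N+1),
    (2 * aK lam κ * knorm (k+3) (F (m+1))) * (2 * aK lam κ * knorm (k+3) (G (N-m+1))) with hW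
  have hWQ : W = 4 * (aK lam κ)^2 * Qsum (k+3) F G N := by
    rw [hW, Qsum, Finset.mul_sum]
    apply Finset.sum_congr rfl
    intro m _
    ring
  have hW0 : 0 ≤ W := by rw [hWQ]; positivity
  clear_value W
  have hib : ∀ i : Fin d, |chain L (fun x => ∑ j : Fin d,
      (lam * (κ:ℝ)^2 + 1) * (ω⁻¹ i j) *
        wick (annih (fBasis lam i κ) F) (annih (fBasis lam j κ) G) N c x) x|
      ≤ (lam * (κ:ℝ)^2 + 1) * (∑ j : Fin d, |ω⁻¹ i j|) * W := by
    intro i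
    rw [chain_finsetSum _ _ (fun j _ => deepD_const_mul _
      (deepD_wick κ N c F G i j hFsm hFper hGsm hGper))]
    refine le_trans (Finset.abs_sum_le_sum_abs _ _) ?_
    have hjb : ∀ j : Fin d, |chain L (fun x =>
        (lam * (κ:ℝ)^2 + 1) * (ω⁻¹ i j) *
          wick (annih (fBasis lam i κ) F) (annih (fBasis lam j κ) G) N c x) x|
        ≤ (lam * (κ:ℝ)^2 + 1) * |ω⁻¹ i j| * W := by
      intro j
      have hcm : (fun x => (lam * (κ:ℝ)^2 + 1) * (ω⁻¹ i j) *
          wick (annih (fBasis lam i κ) F) (annih (fBasis lam j κ) G) N c x)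
          = fun x => ((lam * (κ:ℝ)^2 + 1) * (ω⁻¹ i j)) *
            (fun y => wick (annih (fBasis lam i κ) F) (annih (fBasis lam j κ) G) N c y) x := rfl
      rw [hcm, chain_const_mul, abs_mul, abs_mul, abs_of_pos harg]
      apply mul_le_mul_of_nonneg_left ?_ (mul_nonneg harg.le (abs_nonneg _))
      rw [hW]
      exact chain_wick_bound κ N c F G i j hFsm hFper hGsm hGper hlam k L hL x
    refine le_trans (Finset.sum_le_sum (fun j _ => hjb j)) ?_
    have hre : ∑ j : Fin d, (lam * (κ:ℝ)^2 + 1) * |ω⁻¹ i j| * W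
        = (lam * (κ:ℝ)^2 + 1) * (∑ j : Fin d, |ω⁻¹ i j|) * W := by
      simp only [Finset.sum_mul, Finset.mul_sum]
      try exact Finset.sum_congr rfl (fun j _ => by ring)
    exact le_of_eq hre
  refine le_trans (Finset.abs_sum_le_sum_abs _ _) ?_
  refine le_trans (Finset.sum_le_sum (fun i _ => hib i)) ?_
  have hfin : ∑ i : Fin d, (lam * (κ:ℝ)^2 + 1) * (∑ j : Fin d, |ω⁻¹ i j|) * W
      = (lam * (κ:ℝ)^2 + 1) * Sabs ω⁻¹ * W := by
    rw [Sabs]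
    simp only [Finset.sum_mul, Finset.mul_sum]
    try exact Finset.sum_congr rfl (fun i _ => Finset.sum_congr rfl (fun j _ => by ring))
  rw [hfin, hWQ, tK]
  apply le_of_eq
  ring

include hFsm hFper hGsm hGper in
lemma chain_tsum_Psi (hlam : 0 < lam) (k : ℕ) (L : List (Fin N)) (hL : ∀ a, L.count a ≤ k) :
    chain L (fun x => ∑' κ : ℤ, PsiFun ω F G N c lam κ x)
      = fun x => ∑' κ : ℤ, chain L (PsiFun ω F G N c lam κ) x := by
  induction L with
  | nil => rfl
  | cons i L ih =>
      have hLk : ∀ a, L.count a ≤ k := by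
        intro a
        have := hL a
        rw [List.count_cons] at this
        omega
      rw [chain_cons, ih hLk]
      funext x
      have hu : Summable (fun κ : ℤ => tK lam κ * (Sabs ω⁻¹ * Qsum (k+3) F G N)) :=
        (summable_tK hlam).mul_right _
      have hder : ∀ (κ : ℤ) (y : ℝ), HasDerivAt
          (fun t => chain L (PsiFun ω F G N c lam κ) (Function.update x i t))
          (chain (i :: L) (PsiFun ω F G N c lam κ) (Function.update x i y)) y := by
        intro κ y
        exact deepD_Psi ω F G N c hFsm hFper hGsm hGper κ L i x y
      have hbound : ∀ (κ : ℤ) (y : ℝ),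
          ‖chain (i :: L) (PsiFun ω F G N c lam κ) (Function.update x i y)‖
            ≤ tK lam κ * (Sabs ω⁻¹ * Qsum (k+3) F G N) := by
        intro κ y
        rw [Real.norm_eq_abs]
        exact chain_Psi_bound ω F G N c hFsm hFper hGsm hGper hlam k κ (i :: L) hL _
      have hpt : Summable (fun κ : ℤ => chain L (PsiFun ω F G N c lam κ) (Function.update x i (x i))) := by
        apply Summable.of_abs
        apply Summable.of_nonneg_of_le (fun κ => abs_nonneg _) ?_ hu
        intro κ
        exact chain_Psi_bound ω F G N c hFsm hFper hGsm hGper hlam k κ L hLk _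
      have H := hasDerivAt_tsum hu hder hbound hpt (x i)
      have H2 := H.deriv
      show deriv (fun t => ∑' κ : ℤ, chain L (PsiFun ω F G N c lam κ) (Function.update x i t)) (x i) = _
      rw [H2]
      congr 1
      funext κ
      rw [Function.update_eq_self]

include hFsm hFper hGsm hGper in
lemma knorm_PB_bound (hlam : 0 < lam) (k : ℕ) :
    knorm k (poissonBracket lam ω F G N)
      ≤ ((k:ℝ)+1)^N * ((∑' κ : ℤ, tK lam κ) * (Sabs ω⁻¹ * Qsum (k+3) F G N)) := by
  have hu : Summable (fun κ : ℤ => tK lam κ * (Sabs ω⁻¹ * Qsum (k+3) F G N)) :=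
    (summable_tK hlam).mul_right _
  have hT0 : 0 ≤ (∑' κ : ℤ, tK lam κ) := tsum_nonneg (tK_nonneg hlam)
  have hQ := Qsum_nonneg (d := d) (k+3) F G N
  have hS := Sabs_nonneg (ω⁻¹)
  set B : ℝ := (∑' κ : ℤ, tK lam κ) * (Sabs ω⁻¹ * Qsum (k+3) F G N) with hB
  have hB0 : 0 ≤ B := by positivity
  have hsup : ∀ (β : Fin N → Fin (k+1)) (c : Fin N → Fin d) (x : Fin N → ℝ),
      |mixedDeriv (fun i => ((β i : Fin (k+1)) : ℕ)) (poissonBracket lam ω F G N c) x| ≤ B := by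
    intro β c x
    rw [mixedDeriv_eq_chain, PB_eq_tsum_Psi ω F G N c]
    have hcnt : ∀ a, (canonList (fun i => ((β i : Fin (k+1)) : ℕ))).count a ≤ k := by
      intro a
      rw [count_canonList]
      exact Fin.is_le _
    rw [chain_tsum_Psi ω F G N c hFsm hFper hGsm hGper hlam k _ hcnt]
    have habs : ∀ κ : ℤ, |chain (canonList (fun i => ((β i : Fin (k+1)) : ℕ)))
        (PsiFun ω F G N c lam κ) x| ≤ tK lam κ * (Sabs ω⁻¹ * Qsum (k+3) F G N) :=
      fun κ => chain_Psi_bound ω F G N c hFsm hFper hGsm hGper hlam k κ _ hcnt x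
    have hfs : Summable (fun κ : ℤ => |chain (canonList (fun i => ((β i : Fin (k+1)) : ℕ)))
        (PsiFun ω F G N c lam κ) x|) :=
      Summable.of_nonneg_of_le (fun _ => abs_nonneg _) habs hu
    calc |∑' κ : ℤ, chain (canonList (fun i => ((β i : Fin (k+1)) : ℕ))) (PsiFun ω F G N c lam κ) x|
        ≤ ∑' κ : ℤ, |chain (canonList (fun i => ((β i : Fin (k+1)) : ℕ))) (PsiFun ω F G N c lam κ) x| := by
          have := norm_tsum_le_tsum_norm (f := fun κ : ℤ =>
            chain (canonList (fun i => ((β i : Fin (k+1)) : ℕ))) (PsiFun ω F G N c lam κ) x)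
            (by simpa [Real.norm_eq_abs] using hfs)
          simpa [Real.norm_eq_abs] using this
      _ ≤ ∑' κ : ℤ, tK lam κ * (Sabs ω⁻¹ * Qsum (k+3) F G N) := Summable.tsum_le_tsum habs hfs hu
      _ = B := by rw [hB, tsum_mul_right]
  have hstep : ∀ β : Fin N → Fin (k+1),
      (⨆ (c : Fin N → Fin d) (x : Fin N → ℝ),
        |mixedDeriv (fun i => ((β i : Fin (k+1)) : ℕ)) (poissonBracket lam ω F G N c) x|) ≤ B := by
    intro β
    apply Real.iSup_le ?_ hB0
    intro c
    exact Real.iSup_le (fun x => hsup β c x) hB0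
  calc knorm k (poissonBracket lam ω F G N)
      ≤ ∑ _β : Fin N → Fin (k+1), B := Finset.sum_le_sum (fun β _ => hstep β)
    _ = (Fintype.card (Fin N → Fin (k+1)) : ℝ) * B := by
        rw [Finset.sum_const, Finset.card_univ, nsmul_eq_mul]
    _ = ((k:ℝ)+1)^N * B := by
        rw [Fintype.card_fun, Fintype.card_fin, Fintype.card_fin]
        push_cast
        ring

end master

end PBaux

open PBaux in
/-- the Poisson bracket is a continuous bilinear map
`CO_{∞-} × CO_{∞-} → CO_{∞-}`: `‖{F,G}‖_{k,C} ≤ K ‖F‖_{k₃,C₃} ‖G‖_{k₃,C₃}`,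
using `Σ_k (Ck²+1)⁻¹ < ∞`. -/
theorem poisson_bracket_continuous {d : ℕ} (lam : ℝ) (hlam : 0 < lam)
    (ω : Matrix (Fin d) (Fin d) ℝ) (hanti : ω.transpose = -ω)
    (hnondeg : IsUnit ω.det) :
    ∀ (k : ℕ) (C : ℝ), 0 < C →
      Summable (fun κ : ℤ => (C * (κ:ℝ)^2 + 1)⁻¹) ∧
      ∃ (K C₃ : ℝ) (k₃ : ℕ), 0 < K ∧ 0 < C₃ ∧
        ∀ F G : ConnesSeq (Fin d), MemConnes F → MemConnes G →
          CNorm k C (poissonBracket lam ω F G) ≤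
            K * CNorm k₃ C₃ F * CNorm k₃ C₃ G := by
  intro k C hC
  refine ⟨summable_invquad C hC, ?_⟩
  set C4 : ℝ := C * ((k:ℝ)+1) with hC4
  have hC4pos : 0 < C4 := by positivity
  have hC4ne : C4 ≠ 0 := hC4pos.ne'
  set T : ℝ := ∑' κ : ℤ, tK lam κ with hT
  have hT0 : 0 ≤ T := tsum_nonneg (tK_nonneg hlam)
  set S : ℝ := Sabs ω⁻¹ with hS
  have hS0 : 0 ≤ S := Sabs_nonneg _
  refine ⟨T * S * (C4⁻¹ * C4⁻¹) + 1, C4, k + 3, by positivity, hC4pos, ?_⟩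
  intro F G hF hG
  obtain ⟨hFsm, _, hFper, hFsum⟩ := hF
  obtain ⟨hGsm, _, hGper, hGsum⟩ := hG
  set a : ℕ → ℝ := fun m => C4^m * knorm (k+3) (F m) with ha
  set b : ℕ → ℝ := fun m => C4^m * knorm (k+3) (G m) with hb
  have ha0 : ∀ m, 0 ≤ a m := fun m => mul_nonneg (by positivity) (knorm_nonneg _ _)
  have hb0 : ∀ m, 0 ≤ b m := fun m => mul_nonneg (by positivity) (knorm_nonneg _ _)
  have hsa : Summable a := hFsum (k+3) C4 hC4pos
  have hsb : Summable b := hGsum (k+3) C4 hC4pos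
  set a' : ℕ → ℝ := fun p => a (p+1) with ha'
  set b' : ℕ → ℝ := fun p => b (p+1) with hb'
  have hsa' : Summable a' := (summable_nat_add_iff 1).mpr hsa
  have hsb' : Summable b' := (summable_nat_add_iff 1).mpr hsb
  have hprod : Summable (fun x : ℕ × ℕ => a' x.1 * b' x.2) := by
    apply summable_mul_of_summable_norm (f := a') (g := b')
    · have : (fun p => ‖a' p‖) = a' := funext fun p => abs_of_nonneg (ha0 _)
      rw [this]; exact hsa'
    · have : (fun p => ‖b' p‖) = b' := funext fun p => abs_of_nonneg (hb0 _)
      rw [this]; exact hsb'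
  have hanti : Summable (fun N : ℕ => ∑ kl ∈ Finset.HasAntidiagonal.antidiagonal N, a' kl.1 * b' kl.2) :=
    summable_sum_mul_antidiagonal_of_summable_mul hprod
  have hcauchy : (∑' p, a' p) * (∑' q, b' q)
      = ∑' N, ∑ kl ∈ Finset.HasAntidiagonal.antidiagonal N, a' kl.1 * b' kl.2 :=
    Summable.tsum_mul_tsum_eq_tsum_sum_antidiagonal hsa' hsb' hprod
  have hC4N : ∀ N : ℕ, C4^N = C^N * ((k:ℝ)+1)^N := fun N => by rw [hC4, mul_pow]
  -- termwise bound
  have hbound : ∀ N, C^N * knorm k (poissonBracket lam ω F G N)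
      ≤ (T * S * (C4⁻¹ * C4⁻¹)) * ∑ kl ∈ Finset.HasAntidiagonal.antidiagonal N, a' kl.1 * b' kl.2 := by
    intro N
    have h1 := knorm_PB_bound ω F G N hFsm hFper hGsm hGper hlam k
    have h2 : C^N * knorm k (poissonBracket lam ω F G N)
        ≤ C^N * (((k:ℝ)+1)^N * (T * (S * Qsum (k+3) F G N))) := by
      apply mul_le_mul_of_nonneg_left ?_ (by positivity)
      exact h1
    refine h2.trans (le_of_eq ?_)
    rw [Finset.Nat.sum_antidiagonal_eq_sum_range_succ_mk, Qsum]
    simp only [Finset.mul_sum]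
    apply Finset.sum_congr rfl
    intro m hm
    have hmN : m ≤ N := Nat.lt_succ_iff.mp (Finset.mem_range.mp hm)
    have e1 : C4^(m+1) = C4^m * C4 := pow_succ _ _
    have e2 : C4^(N-m+1) = C4^(N-m) * C4 := pow_succ _ _
    have e3 : C4^m * C4^(N-m) = C4^N := by rw [← pow_add]; congr 1; omega
    show C^N * (((k:ℝ)+1)^N * (T * (S * (knorm (k+3) (F (m+1)) * knorm (k+3) (G (N-m+1))))))
        = (T * S * (C4⁻¹ * C4⁻¹)) * (a' m * b' (N-m))
    have hav : a' m = C4^(m+1) * knorm (k+3) (F (m+1)) := rfl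
    have hbv : b' (N-m) = C4^(N-m+1) * knorm (k+3) (G (N-m+1)) := rfl
    rw [hav, hbv, e1, e2]
    have main : (T * S * (C4⁻¹ * C4⁻¹)) * ((C4^m * C4 * knorm (k+3) (F (m+1)))
          * ((C4^(N-m) * C4) * knorm (k+3) (G (N-m+1))))
        = (C4^m * C4^(N-m)) * (T * (S * (knorm (k+3) (F (m+1)) * knorm (k+3) (G (N-m+1))))) := by
      field_simp
    rw [main, e3, hC4N N]
    ring
  have hmaj : Summable (fun N => (T * S * (C4⁻¹ * C4⁻¹)) * ∑ kl ∈ Finset.HasAntidiagonal.antidiagonal N,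
      a' kl.1 * b' kl.2) := hanti.mul_left _
  have hnn : ∀ N, 0 ≤ C^N * knorm k (poissonBracket lam ω F G N) :=
    fun N => mul_nonneg (by positivity) (knorm_nonneg _ _)
  have hLHSsum : Summable (fun N => C^N * knorm k (poissonBracket lam ω F G N)) :=
    Summable.of_nonneg_of_le hnn hbound hmaj
  have ha'lea : (∑' p, a' p) ≤ ∑' m, a m :=
    Summable.tsum_le_tsum_of_inj (fun p => p+1) (fun x y h => by simpa using h)
      (fun m _ => ha0 m) (fun p => le_rfl) hsa' hsa
  have hb'leb : (∑' p, b' p) ≤ ∑' m, b m :=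
    Summable.tsum_le_tsum_of_inj (fun p => p+1) (fun x y h => by simpa using h)
      (fun m _ => hb0 m) (fun p => le_rfl) hsb' hsb
  have hCNF : CNorm (k+3) C4 F = ∑' m, a m := rfl
  have hCNG : CNorm (k+3) C4 G = ∑' m, b m := rfl
  have htsa0 : 0 ≤ ∑' m, a m := tsum_nonneg ha0
  have htsb0 : 0 ≤ ∑' m, b m := tsum_nonneg hb0
  have htsa'0 : 0 ≤ ∑' p, a' p := tsum_nonneg (fun p => ha0 _)
  have htsb'0 : 0 ≤ ∑' p, b' p := tsum_nonneg (fun p => hb0 _)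
  calc CNorm k C (poissonBracket lam ω F G)
      = ∑' N, C^N * knorm k (poissonBracket lam ω F G N) := rfl
    _ ≤ ∑' N, (T * S * (C4⁻¹ * C4⁻¹)) * ∑ kl ∈ Finset.HasAntidiagonal.antidiagonal N, a' kl.1 * b' kl.2 :=
        Summable.tsum_le_tsum hbound hLHSsum hmaj
    _ = (T * S * (C4⁻¹ * C4⁻¹)) * ∑' N, ∑ kl ∈ Finset.HasAntidiagonal.antidiagonal N, a' kl.1 * b' kl.2 :=
        tsum_mul_left
    _ = (T * S * (C4⁻¹ * C4⁻¹)) * ((∑' p, a' p) * (∑' q, b' q)) := by rw [hcauchy]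
    _ ≤ (T * S * (C4⁻¹ * C4⁻¹)) * ((∑' m, a m) * (∑' m, b m)) := by
        apply mul_le_mul_of_nonneg_left ?_ (by positivity)
        exact mul_le_mul ha'lea hb'leb htsb'0 htsa0
    _ ≤ (T * S * (C4⁻¹ * C4⁻¹) + 1) * ((∑' m, a m) * (∑' m, b m)) := by
        apply mul_le_mul_of_nonneg_right ?_ (by positivity)
        linarith
    _ = (T * S * (C4⁻¹ * C4⁻¹) + 1) * CNorm (k+3) C4 F * CNorm (k+3) C4 G := by
        rw [hCNF, hCNG]; ring

end
end
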